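/- arXiv:2506.13567 — 9 statements merged into one kernel-verified Lean document; each statement's English description precedes it below -/
import Mathlib

section
/- Let Z = HPZ⟨c, G_c, G_b, E, A_c, A_b, b, R⟩ ⊆ ℝ^n be a hybrid polynomial zonotope and let M ∈ ℝ^{m×n}. Then the image of Z under the linear map x ↦ Mx equals the hybrid polynomial zonotope HPZ⟨Mc, MG_c, MG_b, E, A_c, A_b, b, R⟩ ⊆ ℝ^m; that is, {Mz : z ∈ Z} = HPZ⟨Mc, MG_c, MG_b, E, A_c, A_b, b, R⟩. -/
open Matrix BigOperators

/-- Hybrid polynomial zonotope `HPZ⟨c, G_c, G_b, E, A_c, A_b, b, R⟩`: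
the set of all points `c + G_b ξ_b + ∑ i (∏ k ξ_{c,k}^{E k i}) G_c(:,i)` over
`ξ_c ∈ [-1,1]^{n_e}` and `ξ_b ∈ {-1,1}^{n_b}` satisfying
`A_b ξ_b + ∑ i (∏ k ξ_{c,k}^{R k i}) A_c(:,i) = b`. -/
def HPZ {n ιg ιb ιe ιc ιq : Type*}
    [Fintype ιg] [Fintype ιb] [Fintype ιe] [Fintype ιc] [Fintype ιq]
    (c : n → ℝ) (Gc : Matrix n ιg ℝ) (Gb : Matrix n ιb ℝ)
    (E : Matrix ιe ιg ℕ) (Ac : Matrix ιc ιq ℝ) (Ab : Matrix ιc ιb ℝ)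
    (b : ιc → ℝ) (R : Matrix ιe ιq ℕ) : Set (n → ℝ) :=
  { z | ∃ (ξc : ιe → ℝ) (ξb : ιb → ℝ),
      (∀ k, |ξc k| ≤ 1) ∧ (∀ j, ξb j = 1 ∨ ξb j = -1) ∧
      (Ab.mulVec ξb + ∑ i, (∏ k, ξc k ^ R k i) • (fun r => Ac r i)) = b ∧
      z = c + Gb.mulVec ξb + ∑ i, (∏ k, ξc k ^ E k i) • (fun r => Gc r i) }

lemma map_point {n m ng nb : ℕ} (M : Matrix (Fin m) (Fin n) ℝ)
    (c : Fin n → ℝ) (Gc : Matrix (Fin n) (Fin ng) ℝ) (Gb : Matrix (Fin n) (Fin nb) ℝ)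
    (ξb : Fin nb → ℝ) (a : Fin ng → ℝ) :
    M.mulVec (c + Gb.mulVec ξb + ∑ i, a i • (fun r => Gc r i))
      = M.mulVec c + (M * Gb).mulVec ξb + ∑ i, a i • (fun r => (M * Gc) r i) := by
  have h1 : ∀ i, (fun r => (M * Gc) r i) = M.mulVec (fun r => Gc r i) := by
    intro i; ext r; simp [Matrix.mul_apply, Matrix.mulVec, dotProduct]
  simp only [h1, Matrix.mulVec_add, ← Matrix.mulVec_mulVec]
  congr 1
  rw [show (M.mulVec : (Fin n → ℝ) → (Fin m → ℝ)) = M.mulVecLin from rfl, map_sum]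
  simp

/-- Linear map of a hybrid polynomial zonotope:
`M ⊗ HPZ⟨c,G_c,G_b,E,A_c,A_b,b,R⟩ = HPZ⟨Mc, MG_c, MG_b, E, A_c, A_b, b, R⟩`. -/
theorem hpz_linear_map {n m ng nb ne nc nq : ℕ}
    (c : Fin n → ℝ) (Gc : Matrix (Fin n) (Fin ng) ℝ) (Gb : Matrix (Fin n) (Fin nb) ℝ)
    (E : Matrix (Fin ne) (Fin ng) ℕ) (Ac : Matrix (Fin nc) (Fin nq) ℝ)
    (Ab : Matrix (Fin nc) (Fin nb) ℝ) (b : Fin nc → ℝ) (R : Matrix (Fin ne) (Fin nq) ℕ)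
    (M : Matrix (Fin m) (Fin n) ℝ) :
    (fun z => M.mulVec z) '' HPZ c Gc Gb E Ac Ab b R
      = HPZ (M.mulVec c) (M * Gc) (M * Gb) E Ac Ab b R := by
  ext w
  constructor
  · rintro ⟨z, ⟨ξc, ξb, h1, h2, h3, rfl⟩, rfl⟩
    exact ⟨ξc, ξb, h1, h2, h3, map_point M c Gc Gb ξb _⟩
  · rintro ⟨ξc, ξb, h1, h2, h3, rfl⟩
    exact ⟨_, ⟨ξc, ξb, h1, h2, h3, rfl⟩, map_point M c Gc Gb ξb _⟩
end

section
/- Let Z_1 = HPZ⟨c_1, G_{c1}, G_{b1}, E_1, A_{c1}, A_{b1}, b_1, R_1⟩ ⊆ ℝ^n and Z_2 = HPZ⟨c_2, G_{c2}, G_{b2}, E_2, A_{c2}, A_{b2}, b_2, R_2⟩ ⊆ ℝ^n be hybrid polynomial zonotopes. Then their Minkowski sum Z_1 ⊕ Z_2 = {z_1 + z_2 : z_1 ∈ Z_1, z_2 ∈ Z_2} equals the hybrid polynomial zonotope with center c_1 + c_2, continuous generator matrix [G_{c1} G_{c2}], binary generator matrix [G_{b1} G_{b2}], exponent matrix blkdiag(E_1,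 E_2) (block-diagonal, over the concatenated continuous factor vector (ξ_{c1}, ξ_{c2})), continuous constraint matrix blkdiag(A_{c1}, A_{c2}), binary constraint matrix blkdiag(A_{b1}, A_{b2}), constraint vector (b_1; b_2) (stacked), and constraint exponent matrix blkdiag(R_1, R_2). -/
open Matrix BigOperators

lemma prod_blk_inl {κ1 κ2 ι1 ι2 : Type*} [Fintype κ1] [Fintype κ2]
    (ξ1 : κ1 → ℝ) (ξ2 : κ2 → ℝ) (E1 : Matrix κ1 ι1 ℕ) (E2 : Matrix κ2 ι2 ℕ) (i : ι1) :
    ∏ k, Sum.elim ξ1 ξ2 k ^ (Matrix.fromBlocks E1 0 0 E2) k (Sum.inl i)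
      = ∏ k, ξ1 k ^ E1 k i := by
  rw [Fintype.prod_sum_type]; simp

lemma prod_blk_inr {κ1 κ2 ι1 ι2 : Type*} [Fintype κ1] [Fintype κ2]
    (ξ1 : κ1 → ℝ) (ξ2 : κ2 → ℝ) (E1 : Matrix κ1 ι1 ℕ) (E2 : Matrix κ2 ι2 ℕ) (i : ι2) :
    ∏ k, Sum.elim ξ1 ξ2 k ^ (Matrix.fromBlocks E1 0 0 E2) k (Sum.inr i)
      = ∏ k, ξ2 k ^ E2 k i := by
  rw [Fintype.prod_sum_type]; simp

lemma sum_columns_blk {m κ1 κ2 ι1 ι2 : Type*} [Fintype κ1] [Fintype κ2] [Fintype ι1] [Fintype ι2]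
    (ξ1 : κ1 → ℝ) (ξ2 : κ2 → ℝ) (E1 : Matrix κ1 ι1 ℕ) (E2 : Matrix κ2 ι2 ℕ)
    (G1 : Matrix m ι1 ℝ) (G2 : Matrix m ι2 ℝ) :
    ∑ i, (∏ k, Sum.elim ξ1 ξ2 k ^ (Matrix.fromBlocks E1 0 0 E2) k i) •
        (fun r => (Matrix.fromCols G1 G2) r i)
      = (∑ i, (∏ k, ξ1 k ^ E1 k i) • (fun r => G1 r i))
        + ∑ i, (∏ k, ξ2 k ^ E2 k i) • (fun r => G2 r i) := by
  rw [Fintype.sum_sum_type]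
  simp only [prod_blk_inl, prod_blk_inr, Matrix.fromCols]
  simp

lemma sum_constr_blk {κ1 κ2 ι1 ι2 m1 m2 : Type*} [Fintype κ1] [Fintype κ2] [Fintype ι1] [Fintype ι2]
    (ξ1 : κ1 → ℝ) (ξ2 : κ2 → ℝ) (R1 : Matrix κ1 ι1 ℕ) (R2 : Matrix κ2 ι2 ℕ)
    (A1 : Matrix m1 ι1 ℝ) (A2 : Matrix m2 ι2 ℝ) :
    ∑ i, (∏ k, Sum.elim ξ1 ξ2 k ^ (Matrix.fromBlocks R1 0 0 R2) k i) •
        (fun r => (Matrix.fromBlocks A1 0 0 A2) r i)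
      = Sum.elim (∑ i, (∏ k, ξ1 k ^ R1 k i) • (fun r => A1 r i))
          (∑ i, (∏ k, ξ2 k ^ R2 k i) • (fun r => A2 r i)) := by
  funext r
  rw [Finset.sum_apply, Fintype.sum_sum_type]
  cases r with
  | inl r =>
    simp only [prod_blk_inl, prod_blk_inr, Sum.elim_inl, Matrix.fromBlocks_apply₁₁,
      Matrix.fromBlocks_apply₁₂, Pi.smul_apply, smul_eq_mul, Matrix.zero_apply, mul_zero,
      Finset.sum_const_zero, add_zero, Finset.sum_apply]
  | inr r =>
    simp only [prod_blk_inl, prod_blk_inr, Sum.elim_inr, Matrix.fromBlocks_apply₂₁,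
      Matrix.fromBlocks_apply₂₂, Pi.smul_apply, smul_eq_mul, Matrix.zero_apply, mul_zero,
      Finset.sum_const_zero, zero_add, Finset.sum_apply]

/-- Minkowski sum of two hybrid polynomial zonotopes: `Z₁ ⊕ Z₂` equals the HPZ with
center `c₁ + c₂`, concatenated generators, block-diagonal exponent and constraint
matrices, and stacked constraint vector. -/
theorem hpz_minkowski_sum {n ng1 ng2 nb1 nb2 ne1 ne2 nc1 nc2 nq1 nq2 : ℕ}
    (c1 : Fin n → ℝ) (Gc1 : Matrix (Fin n) (Fin ng1) ℝ) (Gb1 : Matrix (Fin n) (Fin nb1) ℝ)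
    (E1 : Matrix (Fin ne1) (Fin ng1) ℕ) (Ac1 : Matrix (Fin nc1) (Fin nq1) ℝ)
    (Ab1 : Matrix (Fin nc1) (Fin nb1) ℝ) (b1 : Fin nc1 → ℝ) (R1 : Matrix (Fin ne1) (Fin nq1) ℕ)
    (c2 : Fin n → ℝ) (Gc2 : Matrix (Fin n) (Fin ng2) ℝ) (Gb2 : Matrix (Fin n) (Fin nb2) ℝ)
    (E2 : Matrix (Fin ne2) (Fin ng2) ℕ) (Ac2 : Matrix (Fin nc2) (Fin nq2) ℝ)
    (Ab2 : Matrix (Fin nc2) (Fin nb2) ℝ) (b2 : Fin nc2 → ℝ) (R2 : Matrix (Fin ne2) (Fin nq2) ℕ) :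
    { z | ∃ z1 ∈ HPZ c1 Gc1 Gb1 E1 Ac1 Ab1 b1 R1,
          ∃ z2 ∈ HPZ c2 Gc2 Gb2 E2 Ac2 Ab2 b2 R2, z = z1 + z2 }
      = HPZ (c1 + c2)
          (Matrix.fromCols Gc1 Gc2)
          (Matrix.fromCols Gb1 Gb2)
          (Matrix.fromBlocks E1 0 0 E2)
          (Matrix.fromBlocks Ac1 0 0 Ac2)
          (Matrix.fromBlocks Ab1 0 0 Ab2)
          (Sum.elim b1 b2)
          (Matrix.fromBlocks R1 0 0 R2) := by
  ext z
  simp only [HPZ, Set.mem_setOf_eq]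
  constructor
  · rintro ⟨z1, ⟨ξc1, ξb1, h1, h2, h3, rfl⟩, z2, ⟨ξc2, ξb2, g1, g2, g3, rfl⟩, rfl⟩
    refine ⟨Sum.elim ξc1 ξc2, Sum.elim ξb1 ξb2, ?_, ?_, ?_, ?_⟩
    · rintro (k | k) <;> simp [h1, g1]
    · rintro (j | j) <;> simp [h2, g2]
    · rw [show Sum.elim ξb1 ξb2 = Sum.elim ξb1 ξb2 from rfl, Matrix.fromBlocks_mulVec,
        sum_constr_blk]
      funext r
      cases r with
      | inl r =>
        have := congrFun h3 r
        simpa using this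
      | inr r =>
        have := congrFun g3 r
        simpa using this
    · rw [Matrix.fromCols_mulVec_sumElim, sum_columns_blk]
      funext r
      simp [Finset.sum_apply]
      ring
  · rintro ⟨ξc, ξb, h1, h2, h3, rfl⟩
    refine ⟨_, ⟨fun k => ξc (Sum.inl k), fun j => ξb (Sum.inl j),
        fun k => h1 _, fun j => h2 _, ?_, rfl⟩,
      _, ⟨fun k => ξc (Sum.inr k), fun j => ξb (Sum.inr j),
        fun k => h1 _, fun j => h2 _, ?_, rfl⟩, ?_⟩
    · funext r
      have hb : ξb = Sum.elim (fun j => ξb (Sum.inl j)) (fun j => ξb (Sum.inr j)) := by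
        funext j; cases j <;> rfl
      have hc : ξc = Sum.elim (fun k => ξc (Sum.inl k)) (fun k => ξc (Sum.inr k)) := by
        funext k; cases k <;> rfl
      rw [hb, hc] at h3
      rw [Matrix.fromBlocks_mulVec, sum_constr_blk] at h3
      have := congrFun h3 (Sum.inl r)
      simpa using this
    · funext r
      have hb : ξb = Sum.elim (fun j => ξb (Sum.inl j)) (fun j => ξb (Sum.inr j)) := by
        funext j; cases j <;> rfl
      have hc : ξc = Sum.elim (fun k => ξc (Sum.inl k)) (fun k => ξc (Sum.inr k)) := by
        funext k; cases k <;> rfl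
      rw [hb, hc] at h3
      rw [Matrix.fromBlocks_mulVec, sum_constr_blk] at h3
      have := congrFun h3 (Sum.inr r)
      simpa using this
    · have hb : ξb = Sum.elim (fun j => ξb (Sum.inl j)) (fun j => ξb (Sum.inr j)) := by
        funext j; cases j <;> rfl
      have hc : ξc = Sum.elim (fun k => ξc (Sum.inl k)) (fun k => ξc (Sum.inr k)) := by
        funext k; cases k <;> rfl
      rw [hb, hc, Matrix.fromCols_mulVec_sumElim, sum_columns_blk]
      funext r
      simp [Finset.sum_apply]
      ring
end

section
/- Let Z_1 = HPZ⟨c_1, G_{c1}, G_{b1}, E_1, A_{c1}, A_{b1}, b_1, R_1⟩ ⊆ ℝ^n and Z_2 = HPZ⟨c_2, G_{c2}, G_{b2}, E_2, A_{c2}, A_{b2}, b_2, R_2⟩ ⊆ ℝ^n be hybrid polynomial zonotopes. Define the set W ⊆ ℝ^n consisting of all points z = c_1 + G_{b1} ξ_{b1} + Σ_{i=1}^{n_{g1}} (Π_{k=1}^{n_{e1}} ξ_{c1,k}^{E_{1,(k,i)}}) G_{c1,(:,i)} over all ξ_{c1} ∈ [−1,1]^{n_{e1}}, ξ_{c2}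 ∈ [−1,1]^{n_{e2}}, ξ_{b1} ∈ {−1,1}^{n_{b1}}, ξ_{b2} ∈ {−1,1}^{n_{b2}} satisfying the three constraint systems: (i) A_{b1} ξ_{b1} + Σ_{i=1}^{n_{q1}} (Π_k ξ_{c1,k}^{R_{1,(k,i)}}) A_{c1,(:,i)} = b_1; (ii) A_{b2} ξ_{b2} + Σ_{i=1}^{n_{q2}} (Π_k ξ_{c2,k}^{R_{2,(k,i)}}) A_{c2,(:,i)} = b_2; (iii) G_{b1} ξ_{b1} − G_{b2} ξ_{b2} + Σ_{i=1}^{n_{g1}} (Π_k ξ_{c1,k}^{E_{1,(k,i)}}) G_{c1,(:,i)} − Σ_{i=1}^{n_{g2}} (Π_k ξ_{c2,k}^{E_{2,(k,i)}}) G_{c2,(:,i)} = c_2 − c_1. Then W = Z_1 ∩ Z_2. In particular, W is a hybrid polynomial zonotope (with continuous factors (ξ_{c1}, ξ_{c2}), binary factors (ξ_{b1}, ξ_{b2}), generators [G_{c1} 0] and [G_{b1} 0], and constraints (i)–(iii)), so hybrid polynomial zonotopes are closed under intersection. -/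
open Matrix BigOperators

/-- Generalized intersection of two hybrid polynomial zonotopes: the set `W` built from
the factors of `Z₁` and `Z₂` subject to the constraints of `Z₁` (i), of `Z₂` (ii), and the
matching constraint (iii), equals `Z₁ ∩ Z₂`; hence HPZs are closed under intersection. -/
theorem hpz_intersection {n ng1 ng2 nb1 nb2 ne1 ne2 nc1 nc2 nq1 nq2 : ℕ}
    (c1 : Fin n → ℝ) (Gc1 : Matrix (Fin n) (Fin ng1) ℝ) (Gb1 : Matrix (Fin n) (Fin nb1) ℝ)
    (E1 : Matrix (Fin ne1) (Fin ng1) ℕ) (Ac1 : Matrix (Fin nc1) (Fin nq1) ℝ)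
    (Ab1 : Matrix (Fin nc1) (Fin nb1) ℝ) (b1 : Fin nc1 → ℝ) (R1 : Matrix (Fin ne1) (Fin nq1) ℕ)
    (c2 : Fin n → ℝ) (Gc2 : Matrix (Fin n) (Fin ng2) ℝ) (Gb2 : Matrix (Fin n) (Fin nb2) ℝ)
    (E2 : Matrix (Fin ne2) (Fin ng2) ℕ) (Ac2 : Matrix (Fin nc2) (Fin nq2) ℝ)
    (Ab2 : Matrix (Fin nc2) (Fin nb2) ℝ) (b2 : Fin nc2 → ℝ) (R2 : Matrix (Fin ne2) (Fin nq2) ℕ) :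
    { z | ∃ (ξc1 : Fin ne1 → ℝ) (ξc2 : Fin ne2 → ℝ) (ξb1 : Fin nb1 → ℝ) (ξb2 : Fin nb2 → ℝ),
        (∀ k, |ξc1 k| ≤ 1) ∧ (∀ k, |ξc2 k| ≤ 1) ∧
        (∀ j, ξb1 j = 1 ∨ ξb1 j = -1) ∧ (∀ j, ξb2 j = 1 ∨ ξb2 j = -1) ∧
        (Ab1.mulVec ξb1 + ∑ i, (∏ k, ξc1 k ^ R1 k i) • (fun r => Ac1 r i)) = b1 ∧
        (Ab2.mulVec ξb2 + ∑ i, (∏ k, ξc2 k ^ R2 k i) • (fun r => Ac2 r i)) = b2 ∧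
        (Gb1.mulVec ξb1 - Gb2.mulVec ξb2
          + ∑ i, (∏ k, ξc1 k ^ E1 k i) • (fun r => Gc1 r i)
          - ∑ i, (∏ k, ξc2 k ^ E2 k i) • (fun r => Gc2 r i)) = c2 - c1 ∧
        z = c1 + Gb1.mulVec ξb1 + ∑ i, (∏ k, ξc1 k ^ E1 k i) • (fun r => Gc1 r i) }
      = HPZ c1 Gc1 Gb1 E1 Ac1 Ab1 b1 R1 ∩ HPZ c2 Gc2 Gb2 E2 Ac2 Ab2 b2 R2 := by
  ext z
  constructor
  · rintro ⟨ξc1, ξc2, ξb1, ξb2, h1, h2, h3, h4, h5, h6, h7, rfl⟩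
    refine ⟨⟨ξc1, ξb1, h1, h3, h5, rfl⟩, ⟨ξc2, ξb2, h2, h4, h6, ?_⟩⟩
    have := h7
    apply_fun (fun v => v + (c1 + Gb2.mulVec ξb2 + ∑ i, (∏ k, ξc2 k ^ E2 k i) • (fun r => Gc2 r i))) at this
    rw [show c2 - c1 + (c1 + Gb2.mulVec ξb2 + ∑ i, (∏ k, ξc2 k ^ E2 k i) • (fun r => Gc2 r i)) = c2 + Gb2.mulVec ξb2 + ∑ i, (∏ k, ξc2 k ^ E2 k i) • (fun r => Gc2 r i) by abel] at this
    rw [← this]; abel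
  · rintro ⟨⟨ξc1, ξb1, h1, h3, h5, rfl⟩, ⟨ξc2, ξb2, h2, h4, h6, heq⟩⟩
    refine ⟨ξc1, ξc2, ξb1, ξb2, h1, h2, h3, h4, h5, h6, ?_, rfl⟩
    have h : c1 + Gb1.mulVec ξb1 + ∑ i, (∏ k, ξc1 k ^ E1 k i) • (fun r => Gc1 r i) = c2 + Gb2.mulVec ξb2 + ∑ i, (∏ k, ξc2 k ^ E2 k i) • (fun r => Gc2 r i) := heq
    apply_fun (fun v => v - (c1 + Gb2.mulVec ξb2 + ∑ i, (∏ k, ξc2 k ^ E2 k i) • (fun r => Gc2 r i))) at h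
    rw [show c2 + Gb2.mulVec ξb2 + (∑ i, (∏ k, ξc2 k ^ E2 k i) • (fun r => Gc2 r i)) - (c1 + Gb2.mulVec ξb2 + ∑ i, (∏ k, ξc2 k ^ E2 k i) • (fun r => Gc2 r i)) = c2 - c1 by abel] at h
    rw [← h]; abel
end

section
/- Let Z = HPZ⟨c, G_c, G_b, E, A_c, A_b, b, R⟩ ⊆ ℝ^n be a hybrid polynomial zonotope, let M ∈ ℝ^{m×n}, l ∈ ℝ^m, ρ ∈ ℝ, and let H⁻ = {x ∈ ℝ^m : lᵀx ≤ ρ} be a halfspace. Define the generalized halfspace intersection Z ∩_M H⁻ = {z ∈ Z : Mz ∈ H⁻}. Suppose l_m ∈ ℝ satisfies l_m ≤ lᵀMz for all z ∈ Z, and l_m ≤ ρ. Define the set W ⊆ ℝ^n of all points z = c + G_b ξ_b + Σ_{i=1}^{n_g} (Π_{k=1}^{n_e} ξ_{c,k}^{E_{(k,i)}}) G_{c,(:,i)} over all ξ_c ∈ [−1,1]^{n_e}, ξ_f ∈ [−1,1], ξ_b ∈ {−1,1}^{n_b} satisfying both (i) A_b ξ_b + Σ_{i=1}^{n_q} (Π_k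 ξ_{c,k}^{R_{(k,i)}}) A_{c,(:,i)} = b and (ii) lᵀM G_b ξ_b + Σ_{i=1}^{n_g} (Π_k ξ_{c,k}^{E_{(k,i)}}) lᵀM G_{c,(:,i)} − ξ_f (ρ − l_m)/2 = (ρ + l_m)/2 − lᵀMc. Then W = Z ∩_M H⁻. In particular, W is a hybrid polynomial zonotope with one additional continuous factor ξ_f and one additional constraint row, so hybrid polynomial zonotopes are closed under generalized halfspace intersection. -/
open Matrix BigOperators

lemma hpz_dotProduct_sum {ι κ : Type*} [Fintype ι] [Fintype κ]
    (v : ι → ℝ) (f : κ → ι → ℝ) :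
    v ⬝ᵥ (∑ i, f i) = ∑ i, v ⬝ᵥ f i := by
  simp only [dotProduct, Finset.sum_apply, Finset.mul_sum]
  exact Finset.sum_comm

lemma hpz_lin {n m ng : ℕ} (M : Matrix (Fin m) (Fin n) ℝ) (l : Fin m → ℝ)
    (c v : Fin n → ℝ) (s : Fin ng → ℝ) (g : Fin ng → Fin n → ℝ) :
    l ⬝ᵥ M.mulVec (c + v + ∑ i, s i • g i)
      = l ⬝ᵥ M.mulVec c + l ⬝ᵥ M.mulVec v + ∑ i, s i * (l ⬝ᵥ M.mulVec (g i)) := by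
  simp only [dotProduct_mulVec, dotProduct_add, hpz_dotProduct_sum, dotProduct_smul,
    smul_eq_mul]

/-- Generalized halfspace intersection: if `l_m` is a lower bound for `lᵀMz` over `z ∈ Z`
and `l_m ≤ ρ`, then the HPZ `W` (with one extra continuous factor `ξ_f` and one extra
constraint row) equals `Z ∩_M H⁻ = {z ∈ Z : lᵀMz ≤ ρ}`. -/
theorem hpz_halfspace_intersection {n m ng nb ne nc nq : ℕ}
    (c : Fin n → ℝ) (Gc : Matrix (Fin n) (Fin ng) ℝ) (Gb : Matrix (Fin n) (Fin nb) ℝ)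
    (E : Matrix (Fin ne) (Fin ng) ℕ) (Ac : Matrix (Fin nc) (Fin nq) ℝ)
    (Ab : Matrix (Fin nc) (Fin nb) ℝ) (b : Fin nc → ℝ) (R : Matrix (Fin ne) (Fin nq) ℕ)
    (M : Matrix (Fin m) (Fin n) ℝ) (l : Fin m → ℝ) (ρ lm : ℝ)
    (hlm : ∀ z ∈ HPZ c Gc Gb E Ac Ab b R, lm ≤ l ⬝ᵥ M.mulVec z)
    (hlmρ : lm ≤ ρ) :
    { z | ∃ (ξc : Fin ne → ℝ) (ξf : ℝ) (ξb : Fin nb → ℝ),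
        (∀ k, |ξc k| ≤ 1) ∧ |ξf| ≤ 1 ∧ (∀ j, ξb j = 1 ∨ ξb j = -1) ∧
        (Ab.mulVec ξb + ∑ i, (∏ k, ξc k ^ R k i) • (fun r => Ac r i)) = b ∧
        (l ⬝ᵥ M.mulVec (Gb.mulVec ξb)
          + ∑ i, (∏ k, ξc k ^ E k i) * (l ⬝ᵥ M.mulVec (fun r => Gc r i))
          - ξf * ((ρ - lm) / 2)) = (ρ + lm) / 2 - l ⬝ᵥ M.mulVec c ∧
        z = c + Gb.mulVec ξb + ∑ i, (∏ k, ξc k ^ E k i) • (fun r => Gc r i) }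
      = { z ∈ HPZ c Gc Gb E Ac Ab b R | l ⬝ᵥ M.mulVec z ≤ ρ } := by
  ext z
  constructor
  · rintro ⟨ξc, ξf, ξb, hc, hf, hb, hA, hcon, rfl⟩
    refine ⟨⟨ξc, ξb, hc, hb, hA, rfl⟩, ?_⟩
    rw [hpz_lin]
    obtain ⟨hf1, hf2⟩ := abs_le.mp hf
    have h1 : ξf * ((ρ - lm) / 2) ≤ (ρ - lm) / 2 := by nlinarith
    linarith
  · rintro ⟨⟨ξc, ξb, hc, hb, hA, rfl⟩, hle⟩
    have hmem : (c + Gb.mulVec ξb + ∑ i, (∏ k, ξc k ^ E k i) • (fun r => Gc r i))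
        ∈ HPZ c Gc Gb E Ac Ab b R := ⟨ξc, ξb, hc, hb, hA, rfl⟩
    have hlo := hlm _ hmem
    rw [hpz_lin] at hle hlo
    by_cases hd : lm = ρ
    · refine ⟨ξc, 0, ξb, hc, by simp, hb, hA, ?_, rfl⟩
      subst hd
      have : l ⬝ᵥ M.mulVec (Gb.mulVec ξb)
          + ∑ i, (∏ k, ξc k ^ E k i) * (l ⬝ᵥ M.mulVec (fun r => Gc r i)) = lm - l ⬝ᵥ M.mulVec c := by
        linarith
      rw [this]; ring
    · have hdpos : (0:ℝ) < (ρ - lm) / 2 := by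
        rcases lt_of_le_of_ne hlmρ hd with h; linarith
      set S := l ⬝ᵥ M.mulVec (Gb.mulVec ξb)
          + ∑ i, (∏ k, ξc k ^ E k i) * (l ⬝ᵥ M.mulVec (fun r => Gc r i)) with hS
      set C := l ⬝ᵥ M.mulVec c with hC
      refine ⟨ξc, (C + S - (ρ + lm) / 2) / ((ρ - lm) / 2), ξb, hc, ?_, hb, hA, ?_, rfl⟩
      · rw [abs_div, abs_of_pos hdpos, div_le_one hdpos, abs_le]
        constructor <;> linarith
      · rw [div_mul_cancel₀ _ (ne_of_gt hdpos)]
        ring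
end

section
/- Let Z_1 = HPZ⟨c_1, G_{c1}, G_{b1}, E_1, A_{c1}, A_{b1}, b_1, R_1⟩ ⊆ ℝ^n and Z_2 = HPZ⟨c_2, G_{c2}, G_{b2}, E_2, A_{c2}, A_{b2}, b_2, R_2⟩ ⊆ ℝ^n be hybrid polynomial zonotopes, and assume every column of each of E_1, E_2, R_1, R_2 contains at least one nonzero (positive) entry. Define ĉ = ½(c_1 + c_2 + G_{b1}𝟙 + G_{b2}𝟙), Ĝ_b = ½(c_1 − c_2 + G_{b2}𝟙 − G_{b1}𝟙), b̂_1 = ½(b_1 − A_{b1}𝟙), Â_{b1} = −½(b_1 + A_{b1}𝟙), b̂_2 = ½(b_2 − A_{b2}𝟙), Â_{b2} = ½(b_2 + A_{b2}𝟙), where 𝟙 is the all-ones vector of appropriate dimension. Define U ⊆ ℝ^n as the set of all points z = ĉ + Ĝ_b ξ_{br} + G_{b1} ξ_{b1} + G_{b2} ξ_{b2} + Σ_{i=1}^{n_{g1}} (Π_k ξ_{c1,k}^{E_{1,(k,i)}}) G_{c1,(:,i)} + Σ_{i=1}^{n_{g2}} (Π_k ξ_{c2,k}^{E_{2,(k,i)}})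 G_{c2,(:,i)} over all ξ_{c1} ∈ [−1,1]^{n_{e1}}, ξ_{c2} ∈ [−1,1]^{n_{e2}}, r_1,…,r_8 vectors with all entries in [−1,1] (of dimensions n_{e1}, n_{e1}, n_{e2}, n_{e2}, n_{b1}, n_{b1}, n_{b2}, n_{b2} respectively), ξ_{b1} ∈ {−1,1}^{n_{b1}}, ξ_{b2} ∈ {−1,1}^{n_{b2}}, ξ_{br} ∈ {−1,1}, satisfying: (a) ξ_{c1} = ½𝟙 − ½ξ_{br}𝟙 − r_1 = −½𝟙 + ½ξ_{br}𝟙 + r_2; (b) ξ_{c2} = ½𝟙 + ½ξ_{br}𝟙 − r_3 = −½𝟙 − ½ξ_{br}𝟙 + r_4; (c) ½ξ_{b1} = −½ξ_{br}𝟙 − r_5 = −𝟙 + ½ξ_{br}𝟙 + r_6; (d) ½ξ_{b2} = ½ξ_{br}𝟙 − r_7 = −𝟙 − ½ξ_{br}𝟙 + r_8; (e) A_{b1} ξ_{b1} + Â_{b1} ξ_{br} + Σ_{i=1}^{n_{q1}} (Π_k ξ_{c1,k}^{R_{1,(k,i)}}) A_{c1,(:,i)} = b̂_1; (f) A_{b2}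 ξ_{b2} + Â_{b2} ξ_{br} + Σ_{i=1}^{n_{q2}} (Π_k ξ_{c2,k}^{R_{2,(k,i)}}) A_{c2,(:,i)} = b̂_2. Then U = Z_1 ∪ Z_2. -/
open Matrix BigOperators

lemma sum_prod_zero_smul {ι κ m : Type*} [Fintype ι] [Fintype κ]
    (E : κ → ι → ℕ) (hE : ∀ i, ∃ k, 0 < E k i) (v : ι → m → ℝ) :
    ∑ i, (∏ k, (0 : κ → ℝ) k ^ E k i) • v i = 0 := by
  apply Finset.sum_eq_zero
  intro i _
  obtain ⟨k, hk⟩ := hE i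
  rw [Finset.prod_eq_zero (Finset.mem_univ k) (by simp [hk.ne']), zero_smul]

lemma mulVec_negOne {m k : Type*} [Fintype k] (M : Matrix m k ℝ) :
    M.mulVec (fun _ => (-1 : ℝ)) = -(M.mulVec 1) := by
  funext x
  simp [Matrix.mulVec, dotProduct]

/-- Union of two hybrid polynomial zonotopes: the set `U` built with the auxiliary
binary factor `ξ_br`, slack factors `r₁,…,r₈`, shifted center `ĉ`, extra binary
generator `Ĝ_b`, and modified constraint data `Â_{b1}, b̂₁, Â_{b2}, b̂₂`
equals `Z₁ ∪ Z₂`. -/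
theorem hpz_union_explicit {n ng1 ng2 nb1 nb2 ne1 ne2 nc1 nc2 nq1 nq2 : ℕ}
    (c1 : Fin n → ℝ) (Gc1 : Matrix (Fin n) (Fin ng1) ℝ) (Gb1 : Matrix (Fin n) (Fin nb1) ℝ)
    (E1 : Matrix (Fin ne1) (Fin ng1) ℕ) (Ac1 : Matrix (Fin nc1) (Fin nq1) ℝ)
    (Ab1 : Matrix (Fin nc1) (Fin nb1) ℝ) (b1 : Fin nc1 → ℝ) (R1 : Matrix (Fin ne1) (Fin nq1) ℕ)
    (c2 : Fin n → ℝ) (Gc2 : Matrix (Fin n) (Fin ng2) ℝ) (Gb2 : Matrix (Fin n) (Fin nb2) ℝ)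
    (E2 : Matrix (Fin ne2) (Fin ng2) ℕ) (Ac2 : Matrix (Fin nc2) (Fin nq2) ℝ)
    (Ab2 : Matrix (Fin nc2) (Fin nb2) ℝ) (b2 : Fin nc2 → ℝ) (R2 : Matrix (Fin ne2) (Fin nq2) ℕ)
    (hE1 : ∀ i, ∃ k, 0 < E1 k i) (hE2 : ∀ i, ∃ k, 0 < E2 k i)
    (hR1 : ∀ i, ∃ k, 0 < R1 k i) (hR2 : ∀ i, ∃ k, 0 < R2 k i)
    (chat Gbhat : Fin n → ℝ) (bhat1 Abhat1 : Fin nc1 → ℝ) (bhat2 Abhat2 : Fin nc2 → ℝ)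
    (hchat : chat = (1/2 : ℝ) • (c1 + c2 + Gb1.mulVec 1 + Gb2.mulVec 1))
    (hGbhat : Gbhat = (1/2 : ℝ) • (c1 - c2 + Gb2.mulVec 1 - Gb1.mulVec 1))
    (hbhat1 : bhat1 = (1/2 : ℝ) • (b1 - Ab1.mulVec 1))
    (hAbhat1 : Abhat1 = (-(1/2) : ℝ) • (b1 + Ab1.mulVec 1))
    (hbhat2 : bhat2 = (1/2 : ℝ) • (b2 - Ab2.mulVec 1))
    (hAbhat2 : Abhat2 = (1/2 : ℝ) • (b2 + Ab2.mulVec 1)) :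
    { z | ∃ (ξc1 : Fin ne1 → ℝ) (ξc2 : Fin ne2 → ℝ)
            (r1 r2 : Fin ne1 → ℝ) (r3 r4 : Fin ne2 → ℝ)
            (r5 r6 : Fin nb1 → ℝ) (r7 r8 : Fin nb2 → ℝ)
            (ξb1 : Fin nb1 → ℝ) (ξb2 : Fin nb2 → ℝ) (ξbr : ℝ),
        (∀ k, |ξc1 k| ≤ 1) ∧ (∀ k, |ξc2 k| ≤ 1) ∧
        (∀ k, |r1 k| ≤ 1) ∧ (∀ k, |r2 k| ≤ 1) ∧ (∀ k, |r3 k| ≤ 1) ∧ (∀ k, |r4 k| ≤ 1) ∧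
        (∀ j, |r5 j| ≤ 1) ∧ (∀ j, |r6 j| ≤ 1) ∧ (∀ j, |r7 j| ≤ 1) ∧ (∀ j, |r8 j| ≤ 1) ∧
        (∀ j, ξb1 j = 1 ∨ ξb1 j = -1) ∧ (∀ j, ξb2 j = 1 ∨ ξb2 j = -1) ∧
        (ξbr = 1 ∨ ξbr = -1) ∧
        (∀ k, ξc1 k = 1/2 - ξbr/2 - r1 k ∧ ξc1 k = -(1/2) + ξbr/2 + r2 k) ∧
        (∀ k, ξc2 k = 1/2 + ξbr/2 - r3 k ∧ ξc2 k = -(1/2) - ξbr/2 + r4 k) ∧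
        (∀ j, ξb1 j / 2 = -(ξbr/2) - r5 j ∧ ξb1 j / 2 = -1 + ξbr/2 + r6 j) ∧
        (∀ j, ξb2 j / 2 = ξbr/2 - r7 j ∧ ξb2 j / 2 = -1 - ξbr/2 + r8 j) ∧
        (Ab1.mulVec ξb1 + ξbr • Abhat1
          + ∑ i, (∏ k, ξc1 k ^ R1 k i) • (fun r => Ac1 r i)) = bhat1 ∧
        (Ab2.mulVec ξb2 + ξbr • Abhat2
          + ∑ i, (∏ k, ξc2 k ^ R2 k i) • (fun r => Ac2 r i)) = bhat2 ∧
        z = chat + ξbr • Gbhat + Gb1.mulVec ξb1 + Gb2.mulVec ξb2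
          + ∑ i, (∏ k, ξc1 k ^ E1 k i) • (fun r => Gc1 r i)
          + ∑ i, (∏ k, ξc2 k ^ E2 k i) • (fun r => Gc2 r i) }
      = HPZ c1 Gc1 Gb1 E1 Ac1 Ab1 b1 R1 ∪ HPZ c2 Gc2 Gb2 E2 Ac2 Ab2 b2 R2 := by
  subst hchat hGbhat hbhat1 hAbhat1 hbhat2 hAbhat2
  ext z
  simp only [Set.mem_setOf_eq, Set.mem_union]
  constructor
  · rintro ⟨ξc1, ξc2, r1, r2, r3, r4, r5, r6, r7, r8, ξb1, ξb2, ξbr,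
      hξc1, hξc2, h1, h2, h3, h4, h5, h6, h7, h8, hb1, hb2, hbr,
      hA, hB, hC, hD, hE, hF, hz⟩
    rcases hbr with hbr | hbr
    · -- ξbr = 1 : point lies in Z₁
      subst hbr
      left
      have hξc2' : ξc2 = 0 := by
        funext k
        have h3' := (abs_le.mp (h3 k)).2
        have h4' := (abs_le.mp (h4 k)).2
        have e1 := (hB k).1
        have e2 := (hB k).2
        simp only [Pi.zero_apply]
        linarith
      subst hξc2'
      have hξb2' : ξb2 = fun _ => -1 := by
        funext j
        have h8' := (abs_le.mp (h8 j)).2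
        have e2 := (hD j).2
        rcases hb2 j with h | h
        · exfalso; rw [h] at e2; linarith
        · exact h
      rw [hξb2'] at hz
      rw [mulVec_negOne] at hz
      rw [sum_prod_zero_smul E2 hE2] at hz
      rw [sum_prod_zero_smul R2 hR2] at hF
      refine ⟨ξc1, ξb1, hξc1, hb1, ?_, ?_⟩
      · funext x
        have h := congrFun hE x
        simp only [Pi.add_apply, Pi.smul_apply, Pi.sub_apply, Pi.neg_apply, smul_eq_mul,
          one_smul, one_mul] at h ⊢
        linarith
      · funext x
        have h := congrFun hz x
        simp only [Pi.add_apply, Pi.smul_apply, Pi.sub_apply, Pi.neg_apply,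
          Pi.zero_apply, smul_eq_mul, one_smul, one_mul, add_zero] at h ⊢
        linarith
    · -- ξbr = -1 : point lies in Z₂
      subst hbr
      right
      have hξc1' : ξc1 = 0 := by
        funext k
        have h1' := (abs_le.mp (h1 k)).2
        have h2' := (abs_le.mp (h2 k)).2
        have e1 := (hA k).1
        have e2 := (hA k).2
        simp only [Pi.zero_apply]
        linarith
      subst hξc1'
      have hξb1' : ξb1 = fun _ => -1 := by
        funext j
        have h6' := (abs_le.mp (h6 j)).2
        have e2 := (hC j).2
        rcases hb1 j with h | h
        · exfalso; rw [h] at e2; linarith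
        · exact h
      rw [hξb1'] at hz
      rw [mulVec_negOne] at hz
      rw [sum_prod_zero_smul E1 hE1] at hz
      rw [sum_prod_zero_smul R1 hR1] at hE
      refine ⟨ξc2, ξb2, hξc2, hb2, ?_, ?_⟩
      · funext x
        have h := congrFun hF x
        simp only [Pi.add_apply, Pi.smul_apply, Pi.sub_apply, Pi.neg_apply, smul_eq_mul,
          neg_one_smul, neg_mul, one_mul] at h ⊢
        linarith
      · funext x
        have h := congrFun hz x
        simp only [Pi.add_apply, Pi.smul_apply, Pi.sub_apply, Pi.neg_apply,
          Pi.zero_apply, smul_eq_mul, neg_one_smul, neg_mul, one_mul, add_zero] at h ⊢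
        linarith
  · rintro (⟨ξc, ξb, hc, hb, hcon, hz⟩ | ⟨ξc, ξb, hc, hb, hcon, hz⟩)
    · -- Z₁ case: take ξbr = 1
      refine ⟨ξc, 0, fun k => -ξc k, ξc, 1, 1,
        (fun j => -(1/2) - ξb j / 2), (fun j => ξb j / 2 + 1/2), 1, 1,
        ξb, (fun _ => -1), 1,
        hc, by simp, (fun k => by simpa using hc k), hc, by simp, by simp,
        ?_, ?_, by simp, by simp,
        hb, fun _ => Or.inr rfl, Or.inl rfl,
        ?_, ?_, ?_, ?_, ?_, ?_, ?_⟩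
      · intro j; rcases hb j with h | h <;> norm_num [h]
      · intro j; rcases hb j with h | h <;> norm_num [h]
      · intro k; constructor <;> ring
      · intro k; simp only [Pi.zero_apply, Pi.one_apply]; constructor <;> norm_num
      · intro j; constructor <;> ring
      · intro j; simp only [Pi.one_apply]; constructor <;> norm_num
      · funext x
        have h := congrFun hcon x
        simp only [Pi.add_apply, Pi.smul_apply, Pi.sub_apply, Pi.neg_apply, smul_eq_mul,
          one_smul, one_mul] at h ⊢
        linarith
      · rw [sum_prod_zero_smul R2 hR2, mulVec_negOne]
        funext x
        simp only [Pi.add_apply, Pi.smul_apply, Pi.sub_apply, Pi.neg_apply,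
          Pi.zero_apply, smul_eq_mul, one_smul, one_mul, add_zero]
        ring
      · rw [sum_prod_zero_smul E2 hE2, mulVec_negOne]
        funext x
        have h := congrFun hz x
        simp only [Pi.add_apply, Pi.smul_apply, Pi.sub_apply, Pi.neg_apply,
          Pi.zero_apply, smul_eq_mul, one_smul, one_mul, add_zero] at h ⊢
        linarith
    · -- Z₂ case: take ξbr = -1
      refine ⟨0, ξc, 1, 1, (fun k => -ξc k), ξc,
        1, 1, (fun j => -(1/2) - ξb j / 2), (fun j => ξb j / 2 + 1/2),
        (fun _ => -1), ξb, -1,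
        by simp, hc, by simp, by simp, (fun k => by simpa using hc k), hc,
        by simp, by simp, ?_, ?_,
        fun _ => Or.inr rfl, hb, Or.inr rfl,
        ?_, ?_, ?_, ?_, ?_, ?_, ?_⟩
      · intro j; rcases hb j with h | h <;> norm_num [h]
      · intro j; rcases hb j with h | h <;> norm_num [h]
      · intro k; simp only [Pi.zero_apply, Pi.one_apply]; constructor <;> norm_num
      · intro k; constructor <;> ring
      · intro j; simp only [Pi.one_apply]; constructor <;> norm_num
      · intro j; constructor <;> ring
      · rw [sum_prod_zero_smul R1 hR1, mulVec_negOne]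
        funext x
        simp only [Pi.add_apply, Pi.smul_apply, Pi.sub_apply, Pi.neg_apply,
          Pi.zero_apply, smul_eq_mul, neg_one_smul, neg_mul, one_mul, add_zero]
        ring
      · funext x
        have h := congrFun hcon x
        simp only [Pi.add_apply, Pi.smul_apply, Pi.sub_apply, Pi.neg_apply, smul_eq_mul,
          neg_one_smul, neg_mul, one_mul] at h ⊢
        linarith
      · rw [sum_prod_zero_smul E1 hE1, mulVec_negOne]
        funext x
        have h := congrFun hz x
        simp only [Pi.add_apply, Pi.smul_apply, Pi.sub_apply, Pi.neg_apply,
          Pi.zero_apply, smul_eq_mul, neg_one_smul, neg_mul, one_mul, add_zero] at h ⊢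
        linarith
end

section
/- Let Z_1, Z_2 ⊆ ℝ^n be hybrid polynomial zonotopes HPZ⟨c_j, G_{cj}, G_{bj}, E_j, A_{cj}, A_{bj}, b_j, R_j⟩ (j = 1, 2) such that every column of each of E_1, E_2, R_1, R_2 contains at least one nonzero (positive) entry. Then Z_1 ∪ Z_2 is a hybrid polynomial zonotope: there exist a dimension-compatible tuple (c, G_c, G_b, E, A_c, A_b, b, R), with natural-number exponent matrices E and R, such that Z_1 ∪ Z_2 = HPZ⟨c, G_c, G_b, E, A_c, A_b, b, R⟩. -/
open Matrix BigOperators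

lemma HPZ_subset_reindex {n ιg ιb ιe ιc ιq ιg' ιb' ιe' ιc' ιq' : Type*}
    [Fintype ιg] [Fintype ιb] [Fintype ιe] [Fintype ιc] [Fintype ιq]
    [Fintype ιg'] [Fintype ιb'] [Fintype ιe'] [Fintype ιc'] [Fintype ιq']
    (eg : ιg ≃ ιg') (eb : ιb ≃ ιb') (ee : ιe ≃ ιe') (ec : ιc ≃ ιc') (eqv : ιq ≃ ιq')
    (c : n → ℝ) (Gc : Matrix n ιg ℝ) (Gb : Matrix n ιb ℝ)
    (E : Matrix ιe ιg ℕ) (Ac : Matrix ιc ιq ℝ) (Ab : Matrix ιc ιb ℝ)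
    (b : ιc → ℝ) (R : Matrix ιe ιq ℕ) :
    HPZ c Gc Gb E Ac Ab b R ⊆
    HPZ c (fun r i => Gc r (eg.symm i)) (fun r j => Gb r (eb.symm j))
      (fun k i => E (ee.symm k) (eg.symm i)) (fun r i => Ac (ec.symm r) (eqv.symm i))
      (fun r j => Ab (ec.symm r) (eb.symm j)) (fun r => b (ec.symm r))
      (fun k i => R (ee.symm k) (eqv.symm i)) := by
  rintro z ⟨ξc, ξb, h1, h2, h3, h4⟩
  refine ⟨ξc ∘ ee.symm, ξb ∘ eb.symm, fun k => h1 _, fun j => h2 _, ?_, ?_⟩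
  · funext r
    have h := congrFun h3 (ec.symm r)
    simp only [Pi.add_apply, mulVec, dotProduct, Finset.sum_apply, Pi.smul_apply,
      smul_eq_mul, Function.comp] at h ⊢
    rw [← h]
    congr 1
    · exact Fintype.sum_equiv eb.symm _ _ (fun j => rfl)
    · exact Fintype.sum_equiv eqv.symm _ _ (fun i => by
        rw [Equiv.prod_comp ee.symm (fun k => ξc k ^ R k (eqv.symm i))])
  · funext r
    have h := congrFun h4 r
    simp only [Pi.add_apply, mulVec, dotProduct, Finset.sum_apply, Pi.smul_apply,
      smul_eq_mul, Function.comp] at h ⊢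
    rw [h]
    congr 1
    · congr 1
      exact (Fintype.sum_equiv eb.symm _ _ (fun j => rfl)).symm
    · exact (Fintype.sum_equiv eg.symm _ _ (fun i => by
        rw [Equiv.prod_comp ee.symm (fun k => ξc k ^ E k (eg.symm i))])).symm

lemma HPZ_reindex {n ιg ιb ιe ιc ιq ιg' ιb' ιe' ιc' ιq' : Type*}
    [Fintype ιg] [Fintype ιb] [Fintype ιe] [Fintype ιc] [Fintype ιq]
    [Fintype ιg'] [Fintype ιb'] [Fintype ιe'] [Fintype ιc'] [Fintype ιq']
    (eg : ιg ≃ ιg') (eb : ιb ≃ ιb') (ee : ιe ≃ ιe') (ec : ιc ≃ ιc') (eqv : ιq ≃ ιq')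
    (c : n → ℝ) (Gc : Matrix n ιg ℝ) (Gb : Matrix n ιb ℝ)
    (E : Matrix ιe ιg ℕ) (Ac : Matrix ιc ιq ℝ) (Ab : Matrix ιc ιb ℝ)
    (b : ιc → ℝ) (R : Matrix ιe ιq ℕ) :
    HPZ c Gc Gb E Ac Ab b R =
    HPZ c (fun r i => Gc r (eg.symm i)) (fun r j => Gb r (eb.symm j))
      (fun k i => E (ee.symm k) (eg.symm i)) (fun r i => Ac (ec.symm r) (eqv.symm i))
      (fun r j => Ab (ec.symm r) (eb.symm j)) (fun r => b (ec.symm r))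
      (fun k i => R (ee.symm k) (eqv.symm i)) := by
  apply Set.Subset.antisymm (HPZ_subset_reindex eg eb ee ec eqv c Gc Gb E Ac Ab b R)
  have h := HPZ_subset_reindex eg.symm eb.symm ee.symm ec.symm eqv.symm c
    (fun r i => Gc r (eg.symm i)) (fun r j => Gb r (eb.symm j))
    (fun k i => E (ee.symm k) (eg.symm i)) (fun r i => Ac (ec.symm r) (eqv.symm i))
    (fun r j => Ab (ec.symm r) (eb.symm j)) (fun r => b (ec.symm r))
    (fun k i => R (ee.symm k) (eqv.symm i))
  simpa using h



section Constr
variable {n ng1 ng2 nb1 nb2 ne1 ne2 nc1 nc2 nq1 nq2 : ℕ}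

/-- continuous factor index: x1, x2, t1, t2, μ -/
abbrev Vt (ne1 ne2 nb1 nb2 : ℕ) :=
  (Fin ne1 ⊕ Fin ne2) ⊕ ((Fin nb1 ⊕ Fin nb2) ⊕ Unit)

/-- base generator index: g1 cols, g2 cols, t1 cols, t2 cols, const -/
abbrev GBt (ng1 ng2 nb1 nb2 : ℕ) :=
  ((Fin ng1 ⊕ Fin ng2) ⊕ (Fin nb1 ⊕ Fin nb2)) ⊕ Unit

/-- base constraint-monomial index: q1, q2, t1-linear, t2-linear, t1-sq, t2-sq, const -/
abbrev QBt (nq1 nq2 nb1 nb2 : ℕ) :=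
  ((Fin nq1 ⊕ Fin nq2) ⊕ ((Fin nb1 ⊕ Fin nb2) ⊕ (Fin nb1 ⊕ Fin nb2))) ⊕ Unit

/-- constraint row index -/
abbrev Ct (nc1 nc2 nb1 nb2 : ℕ) :=
  (Fin nc1 ⊕ Fin nc2) ⊕ ((Fin nb1 ⊕ Fin nb2) ⊕ Unit)

def Ebase (E1 : Matrix (Fin ne1) (Fin ng1) ℕ) (E2 : Matrix (Fin ne2) (Fin ng2) ℕ) :
    Vt ne1 ne2 nb1 nb2 → GBt ng1 ng2 nb1 nb2 → ℕ
  | Sum.inl (Sum.inl k), Sum.inl (Sum.inl (Sum.inl i)) => E1 k i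
  | Sum.inl (Sum.inr k), Sum.inl (Sum.inl (Sum.inr i)) => E2 k i
  | Sum.inr (Sum.inl (Sum.inl k)), Sum.inl (Sum.inr (Sum.inl j)) => if k = j then 1 else 0
  | Sum.inr (Sum.inl (Sum.inr k)), Sum.inl (Sum.inr (Sum.inr j)) => if k = j then 1 else 0
  | _, _ => 0

def muexp : Vt ne1 ne2 nb1 nb2 → ℕ
  | Sum.inr (Sum.inr _) => 1
  | _ => 0

def Efull (E1 : Matrix (Fin ne1) (Fin ng1) ℕ) (E2 : Matrix (Fin ne2) (Fin ng2) ℕ) :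
    Vt ne1 ne2 nb1 nb2 → (GBt ng1 ng2 nb1 nb2 ⊕ GBt ng1 ng2 nb1 nb2) → ℕ
  | k, Sum.inl g => Ebase E1 E2 k g
  | k, Sum.inr g => Ebase E1 E2 k g + muexp k

def Rbase (R1 : Matrix (Fin ne1) (Fin nq1) ℕ) (R2 : Matrix (Fin ne2) (Fin nq2) ℕ) :
    Vt ne1 ne2 nb1 nb2 → QBt nq1 nq2 nb1 nb2 → ℕ
  | Sum.inl (Sum.inl k), Sum.inl (Sum.inl (Sum.inl i)) => R1 k i
  | Sum.inl (Sum.inr k), Sum.inl (Sum.inl (Sum.inr i)) => R2 k i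
  | Sum.inr (Sum.inl (Sum.inl k)), Sum.inl (Sum.inr (Sum.inl (Sum.inl j))) => if k = j then 1 else 0
  | Sum.inr (Sum.inl (Sum.inr k)), Sum.inl (Sum.inr (Sum.inl (Sum.inr j))) => if k = j then 1 else 0
  | Sum.inr (Sum.inl (Sum.inl k)), Sum.inl (Sum.inr (Sum.inr (Sum.inl j))) => if k = j then 2 else 0
  | Sum.inr (Sum.inl (Sum.inr k)), Sum.inl (Sum.inr (Sum.inr (Sum.inr j))) => if k = j then 2 else 0
  | _, _ => 0

def Rfull (R1 : Matrix (Fin ne1) (Fin nq1) ℕ) (R2 : Matrix (Fin ne2) (Fin nq2) ℕ) :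
    Vt ne1 ne2 nb1 nb2 → (QBt nq1 nq2 nb1 nb2 ⊕ QBt nq1 nq2 nb1 nb2) → ℕ
  | k, Sum.inl q => Rbase R1 R2 k q
  | k, Sum.inr q => Rbase R1 R2 k q + muexp k

noncomputable def colP (Gc1 : Matrix (Fin n) (Fin ng1) ℝ) (Gc2 : Matrix (Fin n) (Fin ng2) ℝ)
    (Gb1 : Matrix (Fin n) (Fin nb1) ℝ) (Gb2 : Matrix (Fin n) (Fin nb2) ℝ) :
    GBt ng1 ng2 nb1 nb2 → Fin n → ℝ
  | Sum.inl (Sum.inl (Sum.inl i)) => fun r => Gc1 r i / 2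
  | Sum.inl (Sum.inl (Sum.inr i)) => fun r => Gc2 r i / 2
  | Sum.inl (Sum.inr (Sum.inl j)) => fun r => Gb1 r j / 2
  | Sum.inl (Sum.inr (Sum.inr j)) => fun r => Gb2 r j / 2
  | Sum.inr _ => 0

noncomputable def colM (c1 c2 : Fin n → ℝ) (Gc1 : Matrix (Fin n) (Fin ng1) ℝ) (Gc2 : Matrix (Fin n) (Fin ng2) ℝ)
    (Gb1 : Matrix (Fin n) (Fin nb1) ℝ) (Gb2 : Matrix (Fin n) (Fin nb2) ℝ) :
    GBt ng1 ng2 nb1 nb2 → Fin n → ℝ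
  | Sum.inl (Sum.inl (Sum.inl i)) => fun r => Gc1 r i / 2
  | Sum.inl (Sum.inl (Sum.inr i)) => fun r => -(Gc2 r i) / 2
  | Sum.inl (Sum.inr (Sum.inl j)) => fun r => Gb1 r j / 2
  | Sum.inl (Sum.inr (Sum.inr j)) => fun r => -(Gb2 r j) / 2
  | Sum.inr _ => fun r => (c1 r - c2 r) / 2

noncomputable def Gfull (c1 c2 : Fin n → ℝ) (Gc1 : Matrix (Fin n) (Fin ng1) ℝ) (Gc2 : Matrix (Fin n) (Fin ng2) ℝ)
    (Gb1 : Matrix (Fin n) (Fin nb1) ℝ) (Gb2 : Matrix (Fin n) (Fin nb2) ℝ) :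
    Matrix (Fin n) (GBt ng1 ng2 nb1 nb2 ⊕ GBt ng1 ng2 nb1 nb2) ℝ := fun r g =>
  match g with
  | Sum.inl g => colP Gc1 Gc2 Gb1 Gb2 g r
  | Sum.inr g => colM c1 c2 Gc1 Gc2 Gb1 Gb2 g r

noncomputable def rowP (Ac1 : Matrix (Fin nc1) (Fin nq1) ℝ) (Ac2 : Matrix (Fin nc2) (Fin nq2) ℝ)
    (Ab1 : Matrix (Fin nc1) (Fin nb1) ℝ) (Ab2 : Matrix (Fin nc2) (Fin nb2) ℝ)
    (b1 : Fin nc1 → ℝ) (b2 : Fin nc2 → ℝ) :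
    Ct nc1 nc2 nb1 nb2 → QBt nq1 nq2 nb1 nb2 → ℝ
  | Sum.inl (Sum.inl r), Sum.inl (Sum.inl (Sum.inl i)) => Ac1 r i / 2
  | Sum.inl (Sum.inl r), Sum.inl (Sum.inr (Sum.inl (Sum.inl j))) => Ab1 r j / 2
  | Sum.inl (Sum.inl r), Sum.inr _ => -(b1 r) / 2
  | Sum.inl (Sum.inr r), Sum.inl (Sum.inl (Sum.inr i)) => Ac2 r i / 2
  | Sum.inl (Sum.inr r), Sum.inl (Sum.inr (Sum.inl (Sum.inr j))) => Ab2 r j / 2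
  | Sum.inl (Sum.inr r), Sum.inr _ => -(b2 r) / 2
  | Sum.inr (Sum.inl (Sum.inl j)), Sum.inl (Sum.inr (Sum.inr (Sum.inl j'))) =>
      if j = j' then 1/2 else 0
  | Sum.inr (Sum.inl (Sum.inl _)), Sum.inr _ => -(1/2)
  | Sum.inr (Sum.inl (Sum.inr j)), Sum.inl (Sum.inr (Sum.inr (Sum.inr j'))) =>
      if j = j' then 1/2 else 0
  | Sum.inr (Sum.inl (Sum.inr _)), Sum.inr _ => -(1/2)
  | _, _ => 0

noncomputable def rowM (Ac1 : Matrix (Fin nc1) (Fin nq1) ℝ) (Ac2 : Matrix (Fin nc2) (Fin nq2) ℝ)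
    (Ab1 : Matrix (Fin nc1) (Fin nb1) ℝ) (Ab2 : Matrix (Fin nc2) (Fin nb2) ℝ)
    (b1 : Fin nc1 → ℝ) (b2 : Fin nc2 → ℝ) :
    Ct nc1 nc2 nb1 nb2 → QBt nq1 nq2 nb1 nb2 → ℝ
  | Sum.inl (Sum.inl r), Sum.inl (Sum.inl (Sum.inl i)) => Ac1 r i / 2
  | Sum.inl (Sum.inl r), Sum.inl (Sum.inr (Sum.inl (Sum.inl j))) => Ab1 r j / 2
  | Sum.inl (Sum.inl r), Sum.inr _ => -(b1 r) / 2
  | Sum.inl (Sum.inr r), Sum.inl (Sum.inl (Sum.inr i)) => -(Ac2 r i) / 2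
  | Sum.inl (Sum.inr r), Sum.inl (Sum.inr (Sum.inl (Sum.inr j))) => -(Ab2 r j) / 2
  | Sum.inl (Sum.inr r), Sum.inr _ => b2 r / 2
  | Sum.inr (Sum.inl (Sum.inl j)), Sum.inl (Sum.inr (Sum.inr (Sum.inl j'))) =>
      if j = j' then 1/2 else 0
  | Sum.inr (Sum.inl (Sum.inl _)), Sum.inr _ => -(1/2)
  | Sum.inr (Sum.inl (Sum.inr j)), Sum.inl (Sum.inr (Sum.inr (Sum.inr j'))) =>
      if j = j' then -(1/2) else 0
  | Sum.inr (Sum.inl (Sum.inr _)), Sum.inr _ => 1/2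
  | Sum.inr (Sum.inr _), Sum.inr _ => 1
  | _, _ => 0

noncomputable def Acfull (Ac1 : Matrix (Fin nc1) (Fin nq1) ℝ) (Ac2 : Matrix (Fin nc2) (Fin nq2) ℝ)
    (Ab1 : Matrix (Fin nc1) (Fin nb1) ℝ) (Ab2 : Matrix (Fin nc2) (Fin nb2) ℝ)
    (b1 : Fin nc1 → ℝ) (b2 : Fin nc2 → ℝ) :
    Matrix (Ct nc1 nc2 nb1 nb2) (QBt nq1 nq2 nb1 nb2 ⊕ QBt nq1 nq2 nb1 nb2) ℝ := fun r q =>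
  match q with
  | Sum.inl q => rowP Ac1 Ac2 Ab1 Ab2 b1 b2 r q
  | Sum.inr q => rowM Ac1 Ac2 Ab1 Ab2 b1 b2 r q

noncomputable def Abfull : Matrix (Ct nc1 nc2 nb1 nb2) Unit ℝ := fun r _ =>
  match r with
  | Sum.inr (Sum.inr _) => -1
  | _ => 0

end Constr

section Comp
variable {n ng1 ng2 nb1 nb2 ne1 ne2 nc1 nc2 nq1 nq2 : ℕ}
  (E1 : Matrix (Fin ne1) (Fin ng1) ℕ) (E2 : Matrix (Fin ne2) (Fin ng2) ℕ)
  (R1 : Matrix (Fin ne1) (Fin nq1) ℕ) (R2 : Matrix (Fin ne2) (Fin nq2) ℕ)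
  (c1 c2 : Fin n → ℝ) (Gc1 : Matrix (Fin n) (Fin ng1) ℝ) (Gc2 : Matrix (Fin n) (Fin ng2) ℝ)
  (Gb1 : Matrix (Fin n) (Fin nb1) ℝ) (Gb2 : Matrix (Fin n) (Fin nb2) ℝ)
  (Ac1 : Matrix (Fin nc1) (Fin nq1) ℝ) (Ac2 : Matrix (Fin nc2) (Fin nq2) ℝ)
  (Ab1 : Matrix (Fin nc1) (Fin nb1) ℝ) (Ab2 : Matrix (Fin nc2) (Fin nb2) ℝ)
  (b1 : Fin nc1 → ℝ) (b2 : Fin nc2 → ℝ)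
  (ξ : Vt ne1 ne2 nb1 nb2 → ℝ)

lemma prod_muexp : ∏ k, ξ k ^ muexp k = ξ (Sum.inr (Sum.inr ())) := by
  simp [Fintype.prod_sum_type, muexp]

lemma prod_add_muexp (A : Vt ne1 ne2 nb1 nb2 → ℕ) :
    ∏ k, ξ k ^ (A k + muexp k) = (∏ k, ξ k ^ A k) * ξ (Sum.inr (Sum.inr ())) := by
  simp only [pow_add, Finset.prod_mul_distrib, prod_muexp]

lemma monoE_1 (i : Fin ng1) :
    ∏ k, ξ k ^ Ebase E1 E2 k (Sum.inl (Sum.inl (Sum.inl i)))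
      = ∏ k, ξ (Sum.inl (Sum.inl k)) ^ E1 k i := by
  simp [Fintype.prod_sum_type, Ebase]

lemma monoE_2 (i : Fin ng2) :
    ∏ k, ξ k ^ Ebase E1 E2 k (Sum.inl (Sum.inl (Sum.inr i)))
      = ∏ k, ξ (Sum.inl (Sum.inr k)) ^ E2 k i := by
  simp [Fintype.prod_sum_type, Ebase]

lemma monoE_t1 (j : Fin nb1) :
    ∏ k, ξ k ^ Ebase E1 E2 k (Sum.inl (Sum.inr (Sum.inl j)))
      = ξ (Sum.inr (Sum.inl (Sum.inl j))) := by
  simp [Fintype.prod_sum_type, Ebase, pow_ite]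

lemma monoE_t2 (j : Fin nb2) :
    ∏ k, ξ k ^ Ebase E1 E2 k (Sum.inl (Sum.inr (Sum.inr j)))
      = ξ (Sum.inr (Sum.inl (Sum.inr j))) := by
  simp [Fintype.prod_sum_type, Ebase, pow_ite]

lemma monoE_c : ∏ k, ξ k ^ Ebase E1 E2 k (Sum.inr ()) = 1 := by
  simp [Fintype.prod_sum_type, Ebase]

lemma monoR_1 (i : Fin nq1) :
    ∏ k, ξ k ^ Rbase R1 R2 k (Sum.inl (Sum.inl (Sum.inl i)))
      = ∏ k, ξ (Sum.inl (Sum.inl k)) ^ R1 k i := by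
  simp [Fintype.prod_sum_type, Rbase]

lemma monoR_2 (i : Fin nq2) :
    ∏ k, ξ k ^ Rbase R1 R2 k (Sum.inl (Sum.inl (Sum.inr i)))
      = ∏ k, ξ (Sum.inl (Sum.inr k)) ^ R2 k i := by
  simp [Fintype.prod_sum_type, Rbase]

lemma monoR_t1 (j : Fin nb1) :
    ∏ k, ξ k ^ Rbase R1 R2 k (Sum.inl (Sum.inr (Sum.inl (Sum.inl j))))
      = ξ (Sum.inr (Sum.inl (Sum.inl j))) := by
  simp [Fintype.prod_sum_type, Rbase, pow_ite]

lemma monoR_t2 (j : Fin nb2) :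
    ∏ k, ξ k ^ Rbase R1 R2 k (Sum.inl (Sum.inr (Sum.inl (Sum.inr j))))
      = ξ (Sum.inr (Sum.inl (Sum.inr j))) := by
  simp [Fintype.prod_sum_type, Rbase, pow_ite]

lemma monoR_t1sq (j : Fin nb1) :
    ∏ k, ξ k ^ Rbase R1 R2 k (Sum.inl (Sum.inr (Sum.inr (Sum.inl j))))
      = ξ (Sum.inr (Sum.inl (Sum.inl j))) ^ 2 := by
  simp [Fintype.prod_sum_type, Rbase, pow_ite]

lemma monoR_t2sq (j : Fin nb2) :
    ∏ k, ξ k ^ Rbase R1 R2 k (Sum.inl (Sum.inr (Sum.inr (Sum.inr j))))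
      = ξ (Sum.inr (Sum.inl (Sum.inr j))) ^ 2 := by
  simp [Fintype.prod_sum_type, Rbase, pow_ite]

lemma monoR_c : ∏ k, ξ k ^ Rbase R1 R2 k (Sum.inr ()) = 1 := by
  simp [Fintype.prod_sum_type, Rbase]

lemma genSum (r : Fin n) :
    ∑ g : GBt ng1 ng2 nb1 nb2 ⊕ GBt ng1 ng2 nb1 nb2,
      (∏ k, ξ k ^ Efull E1 E2 k g) * Gfull c1 c2 Gc1 Gc2 Gb1 Gb2 r g
    = (1 + ξ (Sum.inr (Sum.inr ()))) / 2 *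
        ((∑ i, (∏ k, ξ (Sum.inl (Sum.inl k)) ^ E1 k i) * Gc1 r i)
          + ∑ j, ξ (Sum.inr (Sum.inl (Sum.inl j))) * Gb1 r j)
      + (1 - ξ (Sum.inr (Sum.inr ()))) / 2 *
        ((∑ i, (∏ k, ξ (Sum.inl (Sum.inr k)) ^ E2 k i) * Gc2 r i)
          + ∑ j, ξ (Sum.inr (Sum.inl (Sum.inr j))) * Gb2 r j)
      + ξ (Sum.inr (Sum.inr ())) * (c1 r - c2 r) / 2 := by
  rw [Fintype.sum_sum_type, ← Finset.sum_add_distrib]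
  simp only [Efull, Gfull, prod_add_muexp]
  simp only [Fintype.sum_sum_type]
  simp only [monoE_1, monoE_2, monoE_t1, monoE_t2, monoE_c, colP, colM,
    Pi.zero_apply, Fintype.sum_unique]
  have h1 : ∑ x : Fin ng1,
      ((∏ k : Fin ne1, ξ (Sum.inl (Sum.inl k)) ^ E1 k x) * (Gc1 r x / 2) +
        (∏ k : Fin ne1, ξ (Sum.inl (Sum.inl k)) ^ E1 k x) * ξ (Sum.inr (Sum.inr ())) * (Gc1 r x / 2))
      = (1 + ξ (Sum.inr (Sum.inr ()))) / 2 *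
        ∑ i : Fin ng1, (∏ k : Fin ne1, ξ (Sum.inl (Sum.inl k)) ^ E1 k i) * Gc1 r i := by
    rw [Finset.mul_sum]; exact Finset.sum_congr rfl fun x _ => by ring
  have h2 : ∑ x : Fin ng2,
      ((∏ k : Fin ne2, ξ (Sum.inl (Sum.inr k)) ^ E2 k x) * (Gc2 r x / 2) +
        (∏ k : Fin ne2, ξ (Sum.inl (Sum.inr k)) ^ E2 k x) * ξ (Sum.inr (Sum.inr ())) * (-Gc2 r x / 2))
      = (1 - ξ (Sum.inr (Sum.inr ()))) / 2 *
        ∑ i : Fin ng2, (∏ k : Fin ne2, ξ (Sum.inl (Sum.inr k)) ^ E2 k i) * Gc2 r i := by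
    rw [Finset.mul_sum]; exact Finset.sum_congr rfl fun x _ => by ring
  have h3 : ∑ x : Fin nb1,
      (ξ (Sum.inr (Sum.inl (Sum.inl x))) * (Gb1 r x / 2) +
        ξ (Sum.inr (Sum.inl (Sum.inl x))) * ξ (Sum.inr (Sum.inr ())) * (Gb1 r x / 2))
      = (1 + ξ (Sum.inr (Sum.inr ()))) / 2 *
        ∑ j : Fin nb1, ξ (Sum.inr (Sum.inl (Sum.inl j))) * Gb1 r j := by
    rw [Finset.mul_sum]; exact Finset.sum_congr rfl fun x _ => by ring
  have h4 : ∑ x : Fin nb2,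
      (ξ (Sum.inr (Sum.inl (Sum.inr x))) * (Gb2 r x / 2) +
        ξ (Sum.inr (Sum.inl (Sum.inr x))) * ξ (Sum.inr (Sum.inr ())) * (-Gb2 r x / 2))
      = (1 - ξ (Sum.inr (Sum.inr ()))) / 2 *
        ∑ j : Fin nb2, ξ (Sum.inr (Sum.inl (Sum.inr j))) * Gb2 r j := by
    rw [Finset.mul_sum]; exact Finset.sum_congr rfl fun x _ => by ring
  rw [h1, h2, h3, h4]; ring
lemma conSum_c1 (r : Fin nc1) :
    ∑ q : QBt nq1 nq2 nb1 nb2 ⊕ QBt nq1 nq2 nb1 nb2,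
      (∏ k, ξ k ^ Rfull R1 R2 k q) * Acfull Ac1 Ac2 Ab1 Ab2 b1 b2 (Sum.inl (Sum.inl r)) q
    = (1 + ξ (Sum.inr (Sum.inr ()))) / 2 *
        ((∑ i, (∏ k, ξ (Sum.inl (Sum.inl k)) ^ R1 k i) * Ac1 r i)
          + (∑ j, ξ (Sum.inr (Sum.inl (Sum.inl j))) * Ab1 r j) - b1 r) := by
  rw [Fintype.sum_sum_type, ← Finset.sum_add_distrib]
  simp only [Rfull, Acfull, prod_add_muexp]
  simp only [Fintype.sum_sum_type]
  simp only [monoR_1, monoR_2, monoR_t1, monoR_t2, monoR_t1sq, monoR_t2sq, monoR_c,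
    rowP, rowM, Fintype.sum_unique, mul_ite, mul_zero, ite_mul, zero_mul,
    add_zero, zero_add, Finset.sum_const_zero, Finset.sum_ite_eq, Finset.mem_univ, if_true]
  have hA : ∑ x : Fin nq1,
      ((∏ k : Fin ne1, ξ (Sum.inl (Sum.inl k)) ^ R1 k x) * (Ac1 r x / 2) +
        (∏ k : Fin ne1, ξ (Sum.inl (Sum.inl k)) ^ R1 k x) * ξ (Sum.inr (Sum.inr ())) * (Ac1 r x / 2))
      = (1 + ξ (Sum.inr (Sum.inr ()))) / 2 *
        ∑ i : Fin nq1, (∏ k : Fin ne1, ξ (Sum.inl (Sum.inl k)) ^ R1 k i) * Ac1 r i := by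
    rw [Finset.mul_sum]; exact Finset.sum_congr rfl fun x _ => by ring
  have hB : ∑ x : Fin nb1,
      (ξ (Sum.inr (Sum.inl (Sum.inl x))) * (Ab1 r x / 2) +
        ξ (Sum.inr (Sum.inl (Sum.inl x))) * ξ (Sum.inr (Sum.inr ())) * (Ab1 r x / 2))
      = (1 + ξ (Sum.inr (Sum.inr ()))) / 2 *
        ∑ j : Fin nb1, ξ (Sum.inr (Sum.inl (Sum.inl j))) * Ab1 r j := by
    rw [Finset.mul_sum]; exact Finset.sum_congr rfl fun x _ => by ring
  rw [hA, hB]; ring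

lemma conSum_c2 (r : Fin nc2) :
    ∑ q : QBt nq1 nq2 nb1 nb2 ⊕ QBt nq1 nq2 nb1 nb2,
      (∏ k, ξ k ^ Rfull R1 R2 k q) * Acfull Ac1 Ac2 Ab1 Ab2 b1 b2 (Sum.inl (Sum.inr r)) q
    = (1 - ξ (Sum.inr (Sum.inr ()))) / 2 *
        ((∑ i, (∏ k, ξ (Sum.inl (Sum.inr k)) ^ R2 k i) * Ac2 r i)
          + (∑ j, ξ (Sum.inr (Sum.inl (Sum.inr j))) * Ab2 r j) - b2 r) := by
  rw [Fintype.sum_sum_type, ← Finset.sum_add_distrib]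
  simp only [Rfull, Acfull, prod_add_muexp]
  simp only [Fintype.sum_sum_type]
  simp only [monoR_1, monoR_2, monoR_t1, monoR_t2, monoR_t1sq, monoR_t2sq, monoR_c,
    rowP, rowM, Fintype.sum_unique, mul_ite, mul_zero, ite_mul, zero_mul,
    add_zero, zero_add, Finset.sum_const_zero, Finset.sum_ite_eq, Finset.mem_univ, if_true]
  have hA : ∑ x : Fin nq2,
      ((∏ k : Fin ne2, ξ (Sum.inl (Sum.inr k)) ^ R2 k x) * (Ac2 r x / 2) +
        (∏ k : Fin ne2, ξ (Sum.inl (Sum.inr k)) ^ R2 k x) * ξ (Sum.inr (Sum.inr ())) * (-Ac2 r x / 2))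
      = (1 - ξ (Sum.inr (Sum.inr ()))) / 2 *
        ∑ i : Fin nq2, (∏ k : Fin ne2, ξ (Sum.inl (Sum.inr k)) ^ R2 k i) * Ac2 r i := by
    rw [Finset.mul_sum]; exact Finset.sum_congr rfl fun x _ => by ring
  have hB : ∑ x : Fin nb2,
      (ξ (Sum.inr (Sum.inl (Sum.inr x))) * (Ab2 r x / 2) +
        ξ (Sum.inr (Sum.inl (Sum.inr x))) * ξ (Sum.inr (Sum.inr ())) * (-Ab2 r x / 2))
      = (1 - ξ (Sum.inr (Sum.inr ()))) / 2 *
        ∑ j : Fin nb2, ξ (Sum.inr (Sum.inl (Sum.inr j))) * Ab2 r j := by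
    rw [Finset.mul_sum]; exact Finset.sum_congr rfl fun x _ => by ring
  rw [hA, hB]; ring

lemma conSum_t1 (j : Fin nb1) :
    ∑ q : QBt nq1 nq2 nb1 nb2 ⊕ QBt nq1 nq2 nb1 nb2,
      (∏ k, ξ k ^ Rfull R1 R2 k q) *
        Acfull Ac1 Ac2 Ab1 Ab2 b1 b2 (Sum.inr (Sum.inl (Sum.inl j))) q
    = (1 + ξ (Sum.inr (Sum.inr ()))) / 2 * (ξ (Sum.inr (Sum.inl (Sum.inl j))) ^ 2 - 1) := by
  rw [Fintype.sum_sum_type, ← Finset.sum_add_distrib]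
  simp only [Rfull, Acfull, prod_add_muexp]
  simp only [Fintype.sum_sum_type]
  simp only [monoR_1, monoR_2, monoR_t1, monoR_t2, monoR_t1sq, monoR_t2sq, monoR_c,
    rowP, rowM, Fintype.sum_unique, mul_ite, mul_zero, ite_mul, zero_mul,
    add_zero, zero_add, Finset.sum_const_zero, Finset.sum_add_distrib,
    Finset.sum_ite_eq, Finset.mem_univ, if_true]
  ring

lemma conSum_t2 (j : Fin nb2) :
    ∑ q : QBt nq1 nq2 nb1 nb2 ⊕ QBt nq1 nq2 nb1 nb2,
      (∏ k, ξ k ^ Rfull R1 R2 k q) *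
        Acfull Ac1 Ac2 Ab1 Ab2 b1 b2 (Sum.inr (Sum.inl (Sum.inr j))) q
    = (1 - ξ (Sum.inr (Sum.inr ()))) / 2 * (ξ (Sum.inr (Sum.inl (Sum.inr j))) ^ 2 - 1) := by
  rw [Fintype.sum_sum_type, ← Finset.sum_add_distrib]
  simp only [Rfull, Acfull, prod_add_muexp]
  simp only [Fintype.sum_sum_type]
  simp only [monoR_1, monoR_2, monoR_t1, monoR_t2, monoR_t1sq, monoR_t2sq, monoR_c,
    rowP, rowM, Fintype.sum_unique, mul_ite, mul_zero, ite_mul, zero_mul,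
    add_zero, zero_add, Finset.sum_const_zero, Finset.sum_add_distrib,
    Finset.sum_ite_eq, Finset.mem_univ, if_true]
  ring

lemma conSum_mu :
    ∑ q : QBt nq1 nq2 nb1 nb2 ⊕ QBt nq1 nq2 nb1 nb2,
      (∏ k, ξ k ^ Rfull R1 R2 k q) *
        Acfull Ac1 Ac2 Ab1 Ab2 b1 b2 (Sum.inr (Sum.inr ())) q
    = ξ (Sum.inr (Sum.inr ())) := by
  rw [Fintype.sum_sum_type, ← Finset.sum_add_distrib]
  simp only [Rfull, Acfull, prod_add_muexp]
  simp only [Fintype.sum_sum_type]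
  simp only [monoR_1, monoR_2, monoR_t1, monoR_t2, monoR_t1sq, monoR_t2sq, monoR_c,
    rowP, rowM, Fintype.sum_unique, mul_ite, mul_zero, ite_mul, zero_mul,
    add_zero, zero_add, Finset.sum_const_zero, Finset.sum_add_distrib,
    Finset.sum_ite_eq, Finset.mem_univ, if_true]
  ring
end Comp


section Main
variable {n ng1 ng2 nb1 nb2 ne1 ne2 nc1 nc2 nq1 nq2 : ℕ}
  (c1 c2 : Fin n → ℝ) (Gc1 : Matrix (Fin n) (Fin ng1) ℝ) (Gc2 : Matrix (Fin n) (Fin ng2) ℝ)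
  (Gb1 : Matrix (Fin n) (Fin nb1) ℝ) (Gb2 : Matrix (Fin n) (Fin nb2) ℝ)
  (E1 : Matrix (Fin ne1) (Fin ng1) ℕ) (E2 : Matrix (Fin ne2) (Fin ng2) ℕ)
  (Ac1 : Matrix (Fin nc1) (Fin nq1) ℝ) (Ac2 : Matrix (Fin nc2) (Fin nq2) ℝ)
  (Ab1 : Matrix (Fin nc1) (Fin nb1) ℝ) (Ab2 : Matrix (Fin nc2) (Fin nb2) ℝ)
  (b1 : Fin nc1 → ℝ) (b2 : Fin nc2 → ℝ)
  (R1 : Matrix (Fin ne1) (Fin nq1) ℕ) (R2 : Matrix (Fin ne2) (Fin nq2) ℕ)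

lemma hpz_union_sum :
    HPZ c1 Gc1 Gb1 E1 Ac1 Ab1 b1 R1 ∪ HPZ c2 Gc2 Gb2 E2 Ac2 Ab2 b2 R2
      = HPZ (fun r => (c1 r + c2 r) / 2) (Gfull c1 c2 Gc1 Gc2 Gb1 Gb2)
          (0 : Matrix (Fin n) Unit ℝ) (Efull E1 E2) (Acfull Ac1 Ac2 Ab1 Ab2 b1 b2)
          (Abfull (nc1 := nc1) (nc2 := nc2) (nb1 := nb1) (nb2 := nb2))
          (0 : Ct nc1 nc2 nb1 nb2 → ℝ) (Rfull R1 R2) := by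
  ext z
  simp only [Set.mem_union, HPZ, Set.mem_setOf_eq]
  constructor
  · rintro (⟨ξc, ξb, h1, h2, h3, h4⟩ | ⟨ξc, ξb, h1, h2, h3, h4⟩)
    · refine ⟨Sum.elim (Sum.elim ξc 0) (Sum.elim (Sum.elim ξb 0) 1), fun _ => 1, ?_, ?_, ?_, ?_⟩
      · rintro ((k|k)|((j|j)|u))
        · simpa using h1 k
        · simp
        · rcases h2 j with h | h <;> simp [h]
        · simp
        · simp
      · exact fun _ => Or.inl rfl
      · funext row
        simp only [Pi.add_apply, mulVec, dotProduct, Finset.sum_apply, Pi.smul_apply,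
          smul_eq_mul, Fintype.sum_unique, Pi.zero_apply, Matrix.zero_apply, zero_mul, mul_zero]
        rcases row with (r | r) | ((j | j) | u)
        · rw [conSum_c1]
          have h3r := congrFun h3 r
          simp only [Pi.add_apply, mulVec, dotProduct, Finset.sum_apply, Pi.smul_apply,
            smul_eq_mul] at h3r
          have hcomm : ∑ j, (Sum.elim (Sum.elim ξc 0) (Sum.elim (Sum.elim ξb 0) 1) : Vt ne1 ne2 nb1 nb2 → ℝ)
              (Sum.inr (Sum.inl (Sum.inl j))) * Ab1 r j = ∑ j, Ab1 r j * ξb j :=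
            Finset.sum_congr rfl fun j _ => by simp [mul_comm]
          simp only [Sum.elim_inl, Sum.elim_inr, Pi.one_apply, Pi.neg_apply, Pi.zero_apply] at hcomm ⊢
          rw [hcomm]
          simp only [Abfull]
          linear_combination h3r
        · rw [conSum_c2]
          simp only [Sum.elim_inl, Sum.elim_inr, Pi.one_apply, Pi.neg_apply, Pi.zero_apply, Abfull]
          norm_num
        · rw [conSum_t1]
          simp only [Sum.elim_inl, Sum.elim_inr, Pi.one_apply, Pi.neg_apply, Pi.zero_apply, Abfull]
          rcases h2 j with h | h <;> rw [h] <;> norm_num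
        · rw [conSum_t2]
          simp only [Sum.elim_inl, Sum.elim_inr, Pi.one_apply, Pi.neg_apply, Pi.zero_apply, Abfull]
          norm_num
        · rw [conSum_mu]
          simp only [Sum.elim_inl, Sum.elim_inr, Pi.one_apply, Pi.neg_apply, Pi.zero_apply, Abfull]
          norm_num
      · funext r
        have h4r := congrFun h4 r
        simp only [Pi.add_apply, mulVec, dotProduct, Finset.sum_apply, Pi.smul_apply,
          smul_eq_mul, Fintype.sum_unique, Pi.zero_apply, Matrix.zero_apply, zero_mul, mul_zero] at h4r ⊢
        rw [genSum]
        have hcomm : ∑ j, (Sum.elim (Sum.elim ξc 0) (Sum.elim (Sum.elim ξb 0) 1) : Vt ne1 ne2 nb1 nb2 → ℝ)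
            (Sum.inr (Sum.inl (Sum.inl j))) * Gb1 r j = ∑ j, Gb1 r j * ξb j :=
          Finset.sum_congr rfl fun j _ => by simp [mul_comm]
        simp only [Sum.elim_inl, Sum.elim_inr, Pi.one_apply, Pi.neg_apply, Pi.zero_apply] at hcomm ⊢
        rw [hcomm]
        linear_combination h4r
    · refine ⟨Sum.elim (Sum.elim 0 ξc) (Sum.elim (Sum.elim 0 ξb) (-1)), fun _ => -1, ?_, ?_, ?_, ?_⟩
      · rintro ((k|k)|((j|j)|u))
        · simp
        · simpa using h1 k
        · simp
        · rcases h2 j with h | h <;> simp [h]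
        · simp
      · exact fun _ => Or.inr rfl
      · funext row
        simp only [Pi.add_apply, mulVec, dotProduct, Finset.sum_apply, Pi.smul_apply,
          smul_eq_mul, Fintype.sum_unique, Pi.zero_apply, Matrix.zero_apply, zero_mul, mul_zero]
        rcases row with (r | r) | ((j | j) | u)
        · rw [conSum_c1]
          simp only [Sum.elim_inl, Sum.elim_inr, Pi.one_apply, Pi.neg_apply, Pi.zero_apply, Abfull]
          norm_num
        · rw [conSum_c2]
          have h3r := congrFun h3 r
          simp only [Pi.add_apply, mulVec, dotProduct, Finset.sum_apply, Pi.smul_apply,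
            smul_eq_mul] at h3r
          have hcomm : ∑ j, (Sum.elim (Sum.elim 0 ξc) (Sum.elim (Sum.elim 0 ξb) (-1)) : Vt ne1 ne2 nb1 nb2 → ℝ)
              (Sum.inr (Sum.inl (Sum.inr j))) * Ab2 r j = ∑ j, Ab2 r j * ξb j :=
            Finset.sum_congr rfl fun j _ => by simp [mul_comm]
          simp only [Sum.elim_inl, Sum.elim_inr, Pi.one_apply, Pi.neg_apply, Pi.zero_apply] at hcomm ⊢
          rw [hcomm]
          simp only [Abfull]
          linear_combination h3r
        · rw [conSum_t1]
          simp only [Sum.elim_inl, Sum.elim_inr, Pi.one_apply, Pi.neg_apply, Pi.zero_apply, Abfull]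
          norm_num
        · rw [conSum_t2]
          simp only [Sum.elim_inl, Sum.elim_inr, Pi.one_apply, Pi.neg_apply, Pi.zero_apply, Abfull]
          rcases h2 j with h | h <;> rw [h] <;> norm_num
        · rw [conSum_mu]
          simp only [Sum.elim_inl, Sum.elim_inr, Pi.one_apply, Pi.neg_apply, Pi.zero_apply, Abfull]
          norm_num
      · funext r
        have h4r := congrFun h4 r
        simp only [Pi.add_apply, mulVec, dotProduct, Finset.sum_apply, Pi.smul_apply,
          smul_eq_mul, Fintype.sum_unique, Pi.zero_apply, Matrix.zero_apply, zero_mul, mul_zero] at h4r ⊢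
        rw [genSum]
        have hcomm : ∑ j, (Sum.elim (Sum.elim 0 ξc) (Sum.elim (Sum.elim 0 ξb) (-1)) : Vt ne1 ne2 nb1 nb2 → ℝ)
            (Sum.inr (Sum.inl (Sum.inr j))) * Gb2 r j = ∑ j, Gb2 r j * ξb j :=
          Finset.sum_congr rfl fun j _ => by simp [mul_comm]
        simp only [Sum.elim_inl, Sum.elim_inr, Pi.one_apply, Pi.neg_apply, Pi.zero_apply] at hcomm ⊢
        rw [hcomm]
        linear_combination h4r
  · rintro ⟨ξ, ξb', h1, h2, h3, h4⟩
    have hmu := congrFun h3 (Sum.inr (Sum.inr ()))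
    simp only [Pi.add_apply, mulVec, dotProduct, Finset.sum_apply, Pi.smul_apply,
      smul_eq_mul, Fintype.sum_unique, Pi.zero_apply, Matrix.zero_apply, zero_mul, mul_zero, Abfull, conSum_mu] at hmu
    rcases h2 () with hl | hl
    · left
      have hmu1 : ξ (Sum.inr (Sum.inr ())) = 1 := by rw [hl] at hmu; linarith
      refine ⟨fun k => ξ (Sum.inl (Sum.inl k)), fun j => ξ (Sum.inr (Sum.inl (Sum.inl j))),
        fun k => h1 _, ?_, ?_, ?_⟩
      · intro j
        have ht := congrFun h3 (Sum.inr (Sum.inl (Sum.inl j)))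
        simp only [Pi.add_apply, mulVec, dotProduct, Finset.sum_apply, Pi.smul_apply,
          smul_eq_mul, Fintype.sum_unique, Pi.zero_apply, Matrix.zero_apply, zero_mul, mul_zero, Abfull, conSum_t1, hmu1] at ht
        have hsq : ξ (Sum.inr (Sum.inl (Sum.inl j))) * ξ (Sum.inr (Sum.inl (Sum.inl j))) = 1 := by
          nlinarith [ht]
        exact mul_self_eq_one_iff.mp hsq
      · funext r
        have hc := congrFun h3 (Sum.inl (Sum.inl r))
        simp only [Pi.add_apply, mulVec, dotProduct, Finset.sum_apply, Pi.smul_apply,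
          smul_eq_mul, Fintype.sum_unique, Pi.zero_apply, Matrix.zero_apply, zero_mul, mul_zero, Abfull, conSum_c1, hmu1] at hc
        simp only [Pi.add_apply, mulVec, dotProduct, Finset.sum_apply, Pi.smul_apply,
          smul_eq_mul]
        have hcomm : ∑ j, Ab1 r j * ξ (Sum.inr (Sum.inl (Sum.inl j)))
            = ∑ j, ξ (Sum.inr (Sum.inl (Sum.inl j))) * Ab1 r j :=
          Finset.sum_congr rfl fun j _ => mul_comm _ _
        rw [hcomm]
        linarith [hc]
      · funext r
        have h4r := congrFun h4 r
        simp only [Pi.add_apply, mulVec, dotProduct, Finset.sum_apply, Pi.smul_apply,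
          smul_eq_mul, Fintype.sum_unique, Pi.zero_apply, Matrix.zero_apply, zero_mul, mul_zero, genSum, hmu1] at h4r
        simp only [Pi.add_apply, mulVec, dotProduct, Finset.sum_apply, Pi.smul_apply,
          smul_eq_mul]
        have hcomm : ∑ j, Gb1 r j * ξ (Sum.inr (Sum.inl (Sum.inl j)))
            = ∑ j, ξ (Sum.inr (Sum.inl (Sum.inl j))) * Gb1 r j :=
          Finset.sum_congr rfl fun j _ => mul_comm _ _
        rw [hcomm]
        linarith [h4r]
    · right
      have hmu1 : ξ (Sum.inr (Sum.inr ())) = -1 := by rw [hl] at hmu; linarith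
      refine ⟨fun k => ξ (Sum.inl (Sum.inr k)), fun j => ξ (Sum.inr (Sum.inl (Sum.inr j))),
        fun k => h1 _, ?_, ?_, ?_⟩
      · intro j
        have ht := congrFun h3 (Sum.inr (Sum.inl (Sum.inr j)))
        simp only [Pi.add_apply, mulVec, dotProduct, Finset.sum_apply, Pi.smul_apply,
          smul_eq_mul, Fintype.sum_unique, Pi.zero_apply, Matrix.zero_apply, zero_mul, mul_zero, Abfull, conSum_t2, hmu1] at ht
        have hsq : ξ (Sum.inr (Sum.inl (Sum.inr j))) * ξ (Sum.inr (Sum.inl (Sum.inr j))) = 1 := by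
          nlinarith [ht]
        exact mul_self_eq_one_iff.mp hsq
      · funext r
        have hc := congrFun h3 (Sum.inl (Sum.inr r))
        simp only [Pi.add_apply, mulVec, dotProduct, Finset.sum_apply, Pi.smul_apply,
          smul_eq_mul, Fintype.sum_unique, Pi.zero_apply, Matrix.zero_apply, zero_mul, mul_zero, Abfull, conSum_c2, hmu1] at hc
        simp only [Pi.add_apply, mulVec, dotProduct, Finset.sum_apply, Pi.smul_apply,
          smul_eq_mul]
        have hcomm : ∑ j, Ab2 r j * ξ (Sum.inr (Sum.inl (Sum.inr j)))
            = ∑ j, ξ (Sum.inr (Sum.inl (Sum.inr j))) * Ab2 r j :=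
          Finset.sum_congr rfl fun j _ => mul_comm _ _
        rw [hcomm]
        linarith [hc]
      · funext r
        have h4r := congrFun h4 r
        simp only [Pi.add_apply, mulVec, dotProduct, Finset.sum_apply, Pi.smul_apply,
          smul_eq_mul, Fintype.sum_unique, Pi.zero_apply, Matrix.zero_apply, zero_mul, mul_zero, genSum, hmu1] at h4r
        simp only [Pi.add_apply, mulVec, dotProduct, Finset.sum_apply, Pi.smul_apply,
          smul_eq_mul]
        have hcomm : ∑ j, Gb2 r j * ξ (Sum.inr (Sum.inl (Sum.inr j)))
            = ∑ j, ξ (Sum.inr (Sum.inl (Sum.inr j))) * Gb2 r j :=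
          Finset.sum_congr rfl fun j _ => mul_comm _ _
        rw [hcomm]
        linarith [h4r]
end Main


/-- Closure of hybrid polynomial zonotopes under union: if every column of each exponent
matrix `E₁, E₂, R₁, R₂` contains a nonzero entry, then `Z₁ ∪ Z₂` is again a hybrid
polynomial zonotope. -/
theorem hpz_union_closed {n ng1 ng2 nb1 nb2 ne1 ne2 nc1 nc2 nq1 nq2 : ℕ}
    (c1 : Fin n → ℝ) (Gc1 : Matrix (Fin n) (Fin ng1) ℝ) (Gb1 : Matrix (Fin n) (Fin nb1) ℝ)
    (E1 : Matrix (Fin ne1) (Fin ng1) ℕ) (Ac1 : Matrix (Fin nc1) (Fin nq1) ℝ)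
    (Ab1 : Matrix (Fin nc1) (Fin nb1) ℝ) (b1 : Fin nc1 → ℝ) (R1 : Matrix (Fin ne1) (Fin nq1) ℕ)
    (c2 : Fin n → ℝ) (Gc2 : Matrix (Fin n) (Fin ng2) ℝ) (Gb2 : Matrix (Fin n) (Fin nb2) ℝ)
    (E2 : Matrix (Fin ne2) (Fin ng2) ℕ) (Ac2 : Matrix (Fin nc2) (Fin nq2) ℝ)
    (Ab2 : Matrix (Fin nc2) (Fin nb2) ℝ) (b2 : Fin nc2 → ℝ) (R2 : Matrix (Fin ne2) (Fin nq2) ℕ)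
    (hE1 : ∀ i, ∃ k, 0 < E1 k i) (hE2 : ∀ i, ∃ k, 0 < E2 k i)
    (hR1 : ∀ i, ∃ k, 0 < R1 k i) (hR2 : ∀ i, ∃ k, 0 < R2 k i) :
    ∃ (ng nb ne nc nq : ℕ) (c : Fin n → ℝ) (Gc : Matrix (Fin n) (Fin ng) ℝ)
      (Gb : Matrix (Fin n) (Fin nb) ℝ) (E : Matrix (Fin ne) (Fin ng) ℕ)
      (Ac : Matrix (Fin nc) (Fin nq) ℝ) (Ab : Matrix (Fin nc) (Fin nb) ℝ)
      (b : Fin nc → ℝ) (R : Matrix (Fin ne) (Fin nq) ℕ),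
      HPZ c1 Gc1 Gb1 E1 Ac1 Ab1 b1 R1 ∪ HPZ c2 Gc2 Gb2 E2 Ac2 Ab2 b2 R2
        = HPZ c Gc Gb E Ac Ab b R := by
  exact ⟨_, _, _, _, _, _, _, _, _, _, _, _, _,
    (hpz_union_sum c1 c2 Gc1 Gc2 Gb1 Gb2 E1 E2 Ac1 Ac2 Ab1 Ab2 b1 b2 R1 R2).trans
      (HPZ_reindex (Fintype.equivFin _) (Fintype.equivFin _) (Fintype.equivFin _)
        (Fintype.equivFin _) (Fintype.equivFin _) _ _ _ _ _ _ _ _)⟩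
end

section
/- Let Z = HPZ⟨c, G_c, G_b, E, A_c, A_b, b, R⟩ ⊆ ℝ^n be a hybrid polynomial zonotope. Then Z decomposes as the union over all binary assignments of translated constrained polynomial zonotopes: Z = ⋃_{β ∈ {−1,1}^{n_b}} { G_b β + y : y ∈ CPZ⟨c, G_c, E, A_c, b − A_b β, R⟩ }, where CPZ⟨c, G_c, E, A_c, b', R⟩ = { c + Σ_{i=1}^{n_g} (Π_{k=1}^{n_e} ξ_k^{E_{(k,i)}}) G_{c,(:,i)} : ξ ∈ [−1,1]^{n_e}, Σ_{i=1}^{n_q} (Π_{k=1}^{n_e} ξ_k^{R_{(k,i)}}) A_{c,(:,i)} = b' }. In particular, Z is the union of at most 2^{n_b} constrained polynomial zonotopes. -/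
open Matrix BigOperators

/-- Constrained polynomial zonotope `CPZ⟨c, G_c, E, A_c, b', R⟩`. -/
def CPZ {n ιg ιe ιc ιq : Type*}
    [Fintype ιg] [Fintype ιe] [Fintype ιc] [Fintype ιq]
    (c : n → ℝ) (Gc : Matrix n ιg ℝ) (E : Matrix ιe ιg ℕ)
    (Ac : Matrix ιc ιq ℝ) (b' : ιc → ℝ) (R : Matrix ιe ιq ℕ) : Set (n → ℝ) :=
  { y | ∃ ξ : ιe → ℝ,
      (∀ k, |ξ k| ≤ 1) ∧
      (∑ i, (∏ k, ξ k ^ R k i) • (fun r => Ac r i)) = b' ∧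
      y = c + ∑ i, (∏ k, ξ k ^ E k i) • (fun r => Gc r i) }

/-- An HPZ is the union, over all binary assignments `β ∈ {−1,1}^{n_b}`, of the
constrained polynomial zonotopes `CPZ⟨c, G_c, E, A_c, b − A_b β, R⟩` translated by
`G_b β`; in particular it is a union of at most `2^{n_b}` CPZs. -/
theorem hpz_eq_union_of_cpz {n ng nb ne nc nq : ℕ}
    (c : Fin n → ℝ) (Gc : Matrix (Fin n) (Fin ng) ℝ) (Gb : Matrix (Fin n) (Fin nb) ℝ)
    (E : Matrix (Fin ne) (Fin ng) ℕ) (Ac : Matrix (Fin nc) (Fin nq) ℝ)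
    (Ab : Matrix (Fin nc) (Fin nb) ℝ) (b : Fin nc → ℝ) (R : Matrix (Fin ne) (Fin nq) ℕ) :
    HPZ c Gc Gb E Ac Ab b R
      = ⋃ β ∈ { β : Fin nb → ℝ | ∀ j, β j = 1 ∨ β j = -1 },
          { x | ∃ y ∈ CPZ c Gc E Ac (b - Ab.mulVec β) R, x = Gb.mulVec β + y } := by
  ext z
  simp only [HPZ, CPZ, Set.mem_setOf_eq, Set.mem_iUnion, Set.mem_setOf_eq]
  constructor
  · rintro ⟨ξc, ξb, hξc, hξb, hcon, rfl⟩
    refine ⟨ξb, hξb, c + ∑ i, (∏ k, ξc k ^ E k i) • (fun r => Gc r i),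
      ⟨ξc, hξc, ?_, rfl⟩, ?_⟩
    · rw [← hcon]; abel
    · abel
  · rintro ⟨β, hβ, y, ⟨ξ, hξ, hcon, rfl⟩, rfl⟩
    refine ⟨ξ, β, hξ, hβ, ?_, ?_⟩
    · rw [hcon]; abel
    · abel
end

section
/- Let Z = HPZ⟨c, G_c, G_b, E, A_c, A_b, b, R⟩ ⊆ ℝ^n be a hybrid polynomial zonotope, M ∈ ℝ^{m×n}, l ∈ ℝ^m, ρ ∈ ℝ, and l_m ∈ ℝ with l_m ≤ ρ. Let W ⊆ ℝ^n be the set of all points z = c + G_b ξ_b + Σ_{i=1}^{n_g} (Π_{k=1}^{n_e} ξ_{c,k}^{E_{(k,i)}}) G_{c,(:,i)} over all ξ_c ∈ [−1,1]^{n_e}, ξ_f ∈ [−1,1], ξ_b ∈ {−1,1}^{n_b} satisfying (i) A_b ξ_b + Σ_{i=1}^{n_q} (Π_k ξ_{c,k}^{R_{(k,i)}}) A_{c,(:,i)} = b and (ii) lᵀM G_b ξ_b + Σ_{i=1}^{n_g} (Π_k ξ_{c,k}^{E_{(k,i)}}) lᵀM G_{c,(:,i)} − ξ_f (ρ − l_m)/2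 = (ρ + l_m)/2 − lᵀMc. Then every z ∈ W satisfies z ∈ Z and l_m ≤ lᵀMz ≤ ρ; in particular W ⊆ {z ∈ Z : lᵀMz ≤ ρ}. -/
open Matrix BigOperators

lemma dot_sum_smul {m ng : Type*} [Fintype m] [Fintype ng] (l : m → ℝ)
    (a : ng → ℝ) (v : ng → m → ℝ) :
    l ⬝ᵥ (∑ i, a i • v i) = ∑ i, a i * (l ⬝ᵥ v i) := by
  simp only [dotProduct, Finset.sum_apply, Pi.smul_apply, smul_eq_mul,
    Finset.mul_sum]
  rw [Finset.sum_comm]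
  exact Finset.sum_congr rfl (fun i _ => Finset.sum_congr rfl (fun j _ => by ring))

/-- Soundness of the halfspace-intersection construction: every point of the constructed
set `W` lies in `Z` and satisfies `l_m ≤ lᵀMz ≤ ρ`; in particular `W ⊆ {z ∈ Z : lᵀMz ≤ ρ}`. -/
theorem hpz_halfspace_subset {n m ng nb ne nc nq : ℕ}
    (c : Fin n → ℝ) (Gc : Matrix (Fin n) (Fin ng) ℝ) (Gb : Matrix (Fin n) (Fin nb) ℝ)
    (E : Matrix (Fin ne) (Fin ng) ℕ) (Ac : Matrix (Fin nc) (Fin nq) ℝ)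
    (Ab : Matrix (Fin nc) (Fin nb) ℝ) (b : Fin nc → ℝ) (R : Matrix (Fin ne) (Fin nq) ℕ)
    (M : Matrix (Fin m) (Fin n) ℝ) (l : Fin m → ℝ) (ρ lm : ℝ)
    (hlmρ : lm ≤ ρ) :
    ∀ z ∈ { z : Fin n → ℝ | ∃ (ξc : Fin ne → ℝ) (ξf : ℝ) (ξb : Fin nb → ℝ),
        (∀ k, |ξc k| ≤ 1) ∧ |ξf| ≤ 1 ∧ (∀ j, ξb j = 1 ∨ ξb j = -1) ∧
        (Ab.mulVec ξb + ∑ i, (∏ k, ξc k ^ R k i) • (fun r => Ac r i)) = b ∧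
        (l ⬝ᵥ M.mulVec (Gb.mulVec ξb)
          + ∑ i, (∏ k, ξc k ^ E k i) * (l ⬝ᵥ M.mulVec (fun r => Gc r i))
          - ξf * ((ρ - lm) / 2)) = (ρ + lm) / 2 - l ⬝ᵥ M.mulVec c ∧
        z = c + Gb.mulVec ξb + ∑ i, (∏ k, ξc k ^ E k i) • (fun r => Gc r i) },
      z ∈ HPZ c Gc Gb E Ac Ab b R ∧ lm ≤ l ⬝ᵥ M.mulVec z ∧ l ⬝ᵥ M.mulVec z ≤ ρ := by
  rintro z ⟨ξc, ξf, ξb, hξc, hξf, hξb, hcon, hhalf, hz⟩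
  refine ⟨⟨ξc, ξb, hξc, hξb, hcon, hz⟩, ?_⟩
  have hval : l ⬝ᵥ M.mulVec z
      = (ρ + lm) / 2 + ξf * ((ρ - lm) / 2) := by
    have : l ⬝ᵥ M.mulVec z = l ⬝ᵥ M.mulVec c + l ⬝ᵥ M.mulVec (Gb.mulVec ξb)
        + ∑ i, (∏ k, ξc k ^ E k i) * (l ⬝ᵥ M.mulVec (fun r => Gc r i)) := by
      subst hz
      simp only [Matrix.mulVec_add, dotProduct_add, Matrix.dotProduct_mulVec,
        add_assoc]
      congr 1; congr 1
      rw [dot_sum_smul]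
    rw [this]; linarith [hhalf]
  have h1 := abs_le.mp hξf
  constructor
  · rw [hval]; nlinarith [h1.1, h1.2]
  · rw [hval]; nlinarith [h1.1, h1.2]
end

section
/- Let n_1, n_2, m_1, m_2 be natural numbers. Suppose ξ_{br} ∈ {−1,1}, ξ_{c1} ∈ ℝ^{n_1}, ξ_{c2} ∈ ℝ^{n_2}, ξ_{b1} ∈ {−1,1}^{m_1}, ξ_{b2} ∈ {−1,1}^{m_2}, and there exist vectors r_1, r_2 ∈ [−1,1]^{n_1}, r_3, r_4 ∈ [−1,1]^{n_2}, r_5, r_6 ∈ [−1,1]^{m_1}, r_7, r_8 ∈ [−1,1]^{m_2} satisfying, with 𝟙 the all-ones vector of the appropriate dimension: ξ_{c1} = ½𝟙 − ½ξ_{br}𝟙 − r_1 = −½𝟙 + ½ξ_{br}𝟙 + r_2; ξ_{c2} = ½𝟙 + ½ξ_{br}𝟙 − r_3 = −½𝟙 − ½ξ_{br}𝟙 + r_4; ½ξ_{b1} = −½ξ_{br}𝟙 − r_5 = −𝟙 + ½ξ_{br}𝟙 + r_6; ½ξ_{b2} = ½ξ_{br}𝟙 − r_7 = −𝟙 − ½ξ_{br}𝟙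 + r_8. Then: if ξ_{br} = 1 it follows that ξ_{c2} = 0 and ξ_{b2} = −𝟙; and if ξ_{br} = −1 it follows that ξ_{c1} = 0 and ξ_{b1} = −𝟙. -/
/-- Feasibility reduction for the auxiliary factor constraints in the HPZ union
construction: the binary factor `ξ_br` forces the inactive operand's continuous
factors to `0` and its binary factors to `−𝟙`. -/
theorem hpz_union_factor_reduction {n1 n2 m1 m2 : ℕ}
    (ξbr : ℝ) (hbr : ξbr = 1 ∨ ξbr = -1)
    (ξc1 : Fin n1 → ℝ) (ξc2 : Fin n2 → ℝ) (ξb1 : Fin m1 → ℝ) (ξb2 : Fin m2 → ℝ)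
    (hb1 : ∀ j, ξb1 j = 1 ∨ ξb1 j = -1) (hb2 : ∀ j, ξb2 j = 1 ∨ ξb2 j = -1)
    (r1 r2 : Fin n1 → ℝ) (r3 r4 : Fin n2 → ℝ) (r5 r6 : Fin m1 → ℝ) (r7 r8 : Fin m2 → ℝ)
    (hr1 : ∀ k, |r1 k| ≤ 1) (hr2 : ∀ k, |r2 k| ≤ 1)
    (hr3 : ∀ k, |r3 k| ≤ 1) (hr4 : ∀ k, |r4 k| ≤ 1)
    (hr5 : ∀ j, |r5 j| ≤ 1) (hr6 : ∀ j, |r6 j| ≤ 1)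
    (hr7 : ∀ j, |r7 j| ≤ 1) (hr8 : ∀ j, |r8 j| ≤ 1)
    (ha : ∀ k, ξc1 k = 1/2 - ξbr/2 - r1 k ∧ ξc1 k = -(1/2) + ξbr/2 + r2 k)
    (hb : ∀ k, ξc2 k = 1/2 + ξbr/2 - r3 k ∧ ξc2 k = -(1/2) - ξbr/2 + r4 k)
    (hc : ∀ j, ξb1 j / 2 = -(ξbr/2) - r5 j ∧ ξb1 j / 2 = -1 + ξbr/2 + r6 j)
    (hd : ∀ j, ξb2 j / 2 = ξbr/2 - r7 j ∧ ξb2 j / 2 = -1 - ξbr/2 + r8 j) :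
    (ξbr = 1 → (∀ k, ξc2 k = 0) ∧ (∀ j, ξb2 j = -1)) ∧
    (ξbr = -1 → (∀ k, ξc1 k = 0) ∧ (∀ j, ξb1 j = -1)) := by
  constructor
  · intro h
    subst h
    constructor
    · intro k
      obtain ⟨h1, h2⟩ := hb k
      have := abs_le.mp (hr3 k)
      have := abs_le.mp (hr4 k)
      linarith
    · intro j
      obtain ⟨h1, h2⟩ := hd j
      have := abs_le.mp (hr7 j)
      have := abs_le.mp (hr8 j)
      linarith
  · intro h
    subst h
    constructor
    · intro k
      obtain ⟨h1, h2⟩ := ha k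
      have := abs_le.mp (hr1 k)
      have := abs_le.mp (hr2 k)
      linarith
    · intro j
      obtain ⟨h1, h2⟩ := hc j
      have := abs_le.mp (hr5 j)
      have := abs_le.mp (hr6 j)
      linarith
end
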